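/- arXiv:1403.8088 — 11 statements merged into one kernel-verified Lean document; each statement's English description precedes it below -/
import Mathlib

section
/- Let B : ℝ[t] × ℝ[t] → ℝ be a symmetric bilinear form and h a monic polynomial of degree N ≥ 1 such that B(h·f, g) = B(f, h·g) for all polynomials f, g. Suppose B(h·f, g) = ∫ f g dμ₀ for a fixed measure μ₀ (i.e., B agrees with a prescribed bilinear form after multiplication by h). Then B is completely determined by μ₀ together with the N×N symmetric matrix Ŝ with entries Ŝ_{m,m'} = B(t^m, t^{m'}), 0 ≤ m, m' ≤ N−1. -/
/-!
The difference `D = B₁ - B₂` is a symmetric bilinear form with `D (h * f) g = 0`. Dividing by the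
monic `h` with remainder and using symmetry, `D f g = D (f %ₘ h) (g %ₘ h)`, and the remainders lie
in the span of `1, X, …, X ^ (N - 1)`, on which `D` vanishes because `B₁` and `B₂` share `Ŝ`.
-/

open Polynomial MeasureTheory

namespace Polynomial

variable {R M : Type*} [CommRing R] [AddCommGroup M] [Module R M]

theorem bilin_eq_zero_of_mem_degreeLT {D : R[X] →ₗ[R] R[X] →ₗ[R] M} {n : ℕ}
    (hD : ∀ i < n, ∀ j < n, D (X ^ i) (X ^ j) = 0) {p q : R[X]}
    (hp : p ∈ degreeLT R n) (hq : q ∈ degreeLT R n) : D p q = 0 := by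
  classical
  have hmap : Submodule.map₂ D (degreeLT R n) (degreeLT R n) = ⊥ := by
    rw [degreeLT_eq_span_X_pow, Submodule.map₂_span_span, Submodule.span_eq_bot]
    rintro _ ⟨_, hi, _, hj, rfl⟩
    simp only [Finset.coe_image, Finset.coe_range, Set.mem_image, Set.mem_Iio] at hi hj
    obtain ⟨i, hi, rfl⟩ := hi
    obtain ⟨j, hj, rfl⟩ := hj
    exact hD i hi j hj
  exact (Submodule.mem_bot R).1 (hmap ▸ Submodule.apply_mem_map₂ D hp hq)

theorem bilin_eq_zero_of_monic_mul_left [Nontrivial R] {D : R[X] →ₗ[R] R[X] →ₗ[R] M}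
    {h : R[X]} (hh : h.Monic) (hsymm : ∀ f g, D f g = D g f) (hmul : ∀ f g, D (h * f) g = 0)
    (hD : ∀ i < h.natDegree, ∀ j < h.natDegree, D (X ^ i) (X ^ j) = 0) : D = 0 := by
  have hmod f g : D f g = D (f %ₘ h) g := by
    conv_lhs => rw [← modByMonic_add_div f h]
    rw [map_add, LinearMap.add_apply, hmul, add_zero]
  have hrem f : f %ₘ h ∈ degreeLT R h.natDegree :=
    mem_degreeLT.2 (degree_eq_natDegree hh.ne_zero ▸ degree_modByMonic_lt f hh)
  refine LinearMap.ext₂ fun f g => ?_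
  calc D f g = D (f %ₘ h) g := hmod f g
    _ = D (g %ₘ h) (f %ₘ h) := by rw [hsymm, hmod]
    _ = 0 := bilin_eq_zero_of_mem_degreeLT hD (hrem g) (hrem f)

end Polynomial

theorem geronimus_determined_by_measure_and_S_general (N : ℕ)
    (h : Polynomial ℝ) (hmonic : h.Monic) (hdeg : h.natDegree = N)
    (μ₀ : Measure ℝ)
    (B₁ B₂ : Polynomial ℝ →ₗ[ℝ] Polynomial ℝ →ₗ[ℝ] ℝ)
    (hsym₁ : ∀ f g, B₁ f g = B₁ g f) (hsym₂ : ∀ f g, B₂ f g = B₂ g f)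
    (hB₁ : ∀ f g, B₁ (h * f) g = ∫ t, f.eval t * g.eval t ∂μ₀)
    (hB₂ : ∀ f g, B₂ (h * f) g = ∫ t, f.eval t * g.eval t ∂μ₀)
    (hS : ∀ m m' : Fin N, B₁ (X ^ (m : ℕ)) (X ^ (m' : ℕ)) = B₂ (X ^ (m : ℕ)) (X ^ (m' : ℕ))) :
    B₁ = B₂ := by
  subst hdeg
  refine sub_eq_zero.1 (bilin_eq_zero_of_monic_mul_left hmonic ?_ ?_ ?_)
  · intro f g
    simp only [LinearMap.sub_apply, hsym₁ f, hsym₂ f]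
  · intro f g
    simp only [LinearMap.sub_apply, hB₁, hB₂, sub_self]
  · intro i hi j hj
    simp only [LinearMap.sub_apply, hS ⟨i, hi⟩ ⟨j, hj⟩, sub_self]

theorem geronimus_determined_by_measure_and_S (N : ℕ) (hN : 1 ≤ N)
    (h : Polynomial ℝ) (hmonic : h.Monic) (hdeg : h.natDegree = N)
    (μ₀ : Measure ℝ) (hint : ∀ f : Polynomial ℝ, Integrable (fun t => f.eval t) μ₀)
    (B₁ B₂ : Polynomial ℝ →ₗ[ℝ] Polynomial ℝ →ₗ[ℝ] ℝ)
    (hsym₁ : ∀ f g, B₁ f g = B₁ g f) (hsym₂ : ∀ f g, B₂ f g = B₂ g f)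
    (hB₁ : ∀ f g, B₁ (h * f) g = ∫ t, f.eval t * g.eval t ∂μ₀)
    (hB₂ : ∀ f g, B₂ (h * f) g = ∫ t, f.eval t * g.eval t ∂μ₀)
    (hS : ∀ m m' : Fin N, B₁ (X ^ (m : ℕ)) (X ^ (m' : ℕ)) = B₂ (X ^ (m : ℕ)) (X ^ (m' : ℕ))) :
    B₁ = B₂ :=
  geronimus_determined_by_measure_and_S_general N h hmonic hdeg μ₀ B₁ B₂ hsym₁ hsym₂ hB₁ hB₂ hS
end

section
/- Let μ be a measure on ℝ with finite moments of all orders, h a monic polynomial of degree N with zeros α_1,…,α_p of multiplicities β_1,…,β_p, and define dμ₀ = h dμ. Let B be a symmetric bilinear form with B(hf,g) = B(f,hg) = ∫ fg dμ₀ for all polynomials f,g. Then there exists a symmetric N×N real matrix M such that for all polynomials f, g: B(f,g) = ∫ f g dμ + F^T M G, where F = (f(α_1),…,f^{(β_1−1)}(α_1),…,f(α_p),…,f^{(β_p−1)}(α_p))^T and G is the analogous vector for g. In particular, B is a discrete Sobolev-type bilinear form. -/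
/-!
Since `B (h q) g = ∫ q g h dμ = ∫ (h q) g dμ`, the symmetric form `D f g = B f g - ∫ f g dμ`
vanishes as soon as `h ∣ f`. A polynomial whose jet `(f^(k)(α_i))_{k < β_i}` vanishes is divisible
by `h`, and the jet map is onto `ℝ^N`, being injective on the `N`-dimensional space of polynomials
of degree `< N`. So `D` depends only on the jets of its arguments, through a symmetric matrix.
-/

open Polynomial MeasureTheory

namespace Polynomial

theorem pow_X_sub_C_dvd_of_iterate_derivative_eval_eq_zero {R : Type*} [CommRing R] [IsDomain R]
    [CharZero R] {f : R[X]} {a : R} {n : ℕ}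
    (hf : ∀ m < n, (derivative^[m] f).eval a = 0) : (X - C a) ^ n ∣ f := by
  rcases eq_or_ne f 0 with rfl | hf0
  · exact dvd_zero _
  cases n with
  | zero => simp
  | succ k =>
    rw [← le_rootMultiplicity_iff hf0, Nat.add_one_le_iff]
    exact lt_rootMultiplicity_of_isRoot_iterate_derivative hf0 fun m hm =>
      hf m (Nat.lt_add_one_of_le hm)

/-- The values of `f, f', …, f^(β i - 1)` at each node `α i`. -/
noncomputable def jet {R ι : Type*} [CommRing R] (α : ι → R) (β : ι → ℕ) :
    R[X] →ₗ[R] ((i : ι) × Fin (β i) → R) :=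
  LinearMap.pi fun r => (leval (α r.1)).comp (derivative ^ (r.2 : ℕ))

@[simp]
theorem jet_apply {R ι : Type*} [CommRing R] (α : ι → R) (β : ι → ℕ) (f : R[X])
    (r : (i : ι) × Fin (β i)) : jet α β f r = (derivative^[(r.2 : ℕ)] f).eval (α r.1) := by
  simp [jet, Module.End.pow_apply]

section Jet

variable {K ι : Type*} [Field K] [Fintype ι] {α : ι → K} {β : ι → ℕ}

theorem prod_dvd_of_jet_eq_zero [CharZero K] (hα : Function.Injective α) {f : K[X]}
    (hf : jet α β f = 0) :
    ∏ i, (X - C (α i)) ^ β i ∣ f :=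
  Fintype.prod_dvd_of_coprime ((pairwise_coprime_X_sub_C hα).mono fun _ _ h => h.pow)
    fun i => pow_X_sub_C_dvd_of_iterate_derivative_eval_eq_zero fun m hm => by
      simpa using congrFun hf ⟨i, m, hm⟩

theorem natDegree_prod_X_sub_C_pow (α : ι → K) (β : ι → ℕ) :
    (∏ i, (X - C (α i)) ^ β i).natDegree = ∑ i, β i := by
  rw [natDegree_prod_of_monic _ _ fun i _ => (monic_X_sub_C (α i)).pow _]
  simp [natDegree_pow]

theorem jet_surjective [CharZero K] (hα : Function.Injective α) :
    Function.Surjective (jet α β) := by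
  let V := degreeLT K (∑ i, β i)
  have : FiniteDimensional K V := .equiv (degreeLTEquiv K _).symm
  let J := jet α β ∘ₗ V.subtype
  have hinj : Function.Injective J := by
    rw [← LinearMap.ker_eq_bot, LinearMap.ker_eq_bot']
    rintro ⟨f, hf⟩ hJf
    have hmonic : (∏ i, (X - C (α i)) ^ β i).Monic :=
      monic_prod_of_monic _ _ fun i _ => (monic_X_sub_C (α i)).pow (β i)
    refine Subtype.ext (eq_zero_of_dvd_of_degree_lt (prod_dvd_of_jet_eq_zero hα hJf) ?_)
    rw [degree_eq_natDegree hmonic.ne_zero, natDegree_prod_X_sub_C_pow]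
    exact mem_degreeLT.mp hf
  have hrank : Module.finrank K V = Module.finrank K ((i : ι) × Fin (β i) → K) := by
    simp [V, (degreeLTEquiv K _).finrank_eq]
  intro v
  obtain ⟨f, hf⟩ := (LinearMap.injective_iff_surjective_of_finrank_eq_finrank hrank).mp hinj v
  exact ⟨f, hf⟩

end Jet

end Polynomial

namespace LinearMap

variable {R V ι : Type*} [CommRing R] [AddCommGroup V] [Module R V] [Fintype ι]

theorem apply_eq_sum_of_apply_eq_single [DecidableEq ι] {J : V →ₗ[R] ι → R} {e : ι → V}
    (he : ∀ r, J (e r) = Pi.single r 1) {D : V →ₗ[R] V →ₗ[R] R}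
    (hker : ∀ f, J f = 0 → ∀ g, D f g = 0) (f g : V) :
    D f g = ∑ r, J f r * D (e r) g := by
  have hJ : J (f - ∑ r, J f r • e r) = 0 := by
    ext r
    simp [map_sum, he, Pi.single_apply]
  have := hker _ hJ g
  simp only [map_sub, map_sum, map_smul, sub_apply, sum_apply, smul_apply, smul_eq_mul] at this
  exact sub_eq_zero.mp this

theorem exists_isSymm_matrix_of_surjective {J : V →ₗ[R] ι → R} (hJ : Function.Surjective J)
    {D : V →ₗ[R] V →ₗ[R] R} (hsym : ∀ f g, D f g = D g f)
    (hker : ∀ f, J f = 0 → ∀ g, D f g = 0) :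
    ∃ M : Matrix ι ι R, M.IsSymm ∧ ∀ f g, D f g = ∑ r, ∑ s, M r s * J f r * J g s := by
  classical
  choose e he using fun r => hJ (Pi.single r 1)
  refine ⟨.of fun r s => D (e r) (e s), Matrix.ext fun r s => hsym _ _, fun f g => ?_⟩
  rw [apply_eq_sum_of_apply_eq_single he hker]
  refine Finset.sum_congr rfl fun r _ => ?_
  rw [hsym, apply_eq_sum_of_apply_eq_single he hker, Finset.mul_sum]
  refine Finset.sum_congr rfl fun s _ => ?_
  rw [hsym, Matrix.of_apply]
  ring

end LinearMap

namespace Polynomial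

noncomputable def integralLinearMap (μ : Measure ℝ)
    (hint : ∀ f : ℝ[X], Integrable (fun t => f.eval t) μ) : ℝ[X] →ₗ[ℝ] ℝ where
  toFun f := ∫ t, f.eval t ∂μ
  map_add' f g := by simpa only [eval_add] using integral_add (hint f) (hint g)
  map_smul' c f := by
    simpa only [eval_smul, smul_eq_mul, RingHom.id_apply] using integral_const_mul c _

theorem integralLinearMap_apply (μ : Measure ℝ)
    (hint : ∀ f : ℝ[X], Integrable (fun t => f.eval t) μ) (f : ℝ[X]) :
    integralLinearMap μ hint f = ∫ t, f.eval t ∂μ :=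
  rfl

end Polynomial

theorem geronimus_is_discrete_sobolev_general (p : ℕ) (α : Fin p → ℝ)
    (hα : Function.Injective α) (β : Fin p → ℕ)
    (h : Polynomial ℝ) (hh : h = ∏ i, (X - C (α i)) ^ β i)
    (μ : Measure ℝ) (hint : ∀ f : Polynomial ℝ, Integrable (fun t => f.eval t) μ)
    (B : Polynomial ℝ →ₗ[ℝ] Polynomial ℝ →ₗ[ℝ] ℝ)
    (hsym : ∀ f g, B f g = B g f)
    (hB : ∀ f g, B (h * f) g = ∫ t, f.eval t * g.eval t * h.eval t ∂μ) :
    ∃ M : Matrix ((i : Fin p) × Fin (β i)) ((i : Fin p) × Fin (β i)) ℝ,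
      M.IsSymm ∧
      ∀ f g : Polynomial ℝ,
        B f g = (∫ t, f.eval t * g.eval t ∂μ) +
          ∑ r : (i : Fin p) × Fin (β i), ∑ s : (i : Fin p) × Fin (β i),
            M r s * (Polynomial.derivative^[(r.2 : ℕ)] f).eval (α r.1) *
              (Polynomial.derivative^[(s.2 : ℕ)] g).eval (α s.1) := by
  set D := B - (LinearMap.mul ℝ ℝ[X]).compr₂ (integralLinearMap μ hint)
  have hD (f g : ℝ[X]) : D f g = B f g - ∫ t, f.eval t * g.eval t ∂μ := by
    simp [D, integralLinearMap_apply]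
  have hDsym (f g : ℝ[X]) : D f g = D g f := by
    simp only [hD, hsym f g, mul_comm]
  have hDker (f : ℝ[X]) (hf : jet α β f = 0) (g : ℝ[X]) : D f g = 0 := by
    obtain ⟨q, rfl⟩ : h ∣ f := hh ▸ prod_dvd_of_jet_eq_zero hα hf
    simp only [hD, hB, eval_mul, sub_eq_zero]
    exact integral_congr_ae (.of_forall fun t => by ring)
  obtain ⟨M, hM, hDM⟩ :=
    LinearMap.exists_isSymm_matrix_of_surjective (jet_surjective hα) hDsym hDker
  refine ⟨M, hM, fun f g => ?_⟩
  simpa [hD, sub_eq_iff_eq_add'] using hDM f g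

theorem geronimus_is_discrete_sobolev (p N : ℕ) (hN : 1 ≤ N) (α : Fin p → ℝ)
    (hα : Function.Injective α) (β : Fin p → ℕ) (hβ : ∀ i, 1 ≤ β i)
    (hsum : ∑ i, β i = N)
    (h : Polynomial ℝ) (hh : h = ∏ i, (X - C (α i)) ^ β i)
    (μ : Measure ℝ) (hint : ∀ f : Polynomial ℝ, Integrable (fun t => f.eval t) μ)
    (B : Polynomial ℝ →ₗ[ℝ] Polynomial ℝ →ₗ[ℝ] ℝ)
    (hsym : ∀ f g, B f g = B g f)
    (hB : ∀ f g, B (h * f) g = ∫ t, f.eval t * g.eval t * h.eval t ∂μ)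
    (hB' : ∀ f g, B f (h * g) = ∫ t, f.eval t * g.eval t * h.eval t ∂μ) :
    ∃ M : Matrix ((i : Fin p) × Fin (β i)) ((i : Fin p) × Fin (β i)) ℝ,
      M.IsSymm ∧
      ∀ f g : Polynomial ℝ,
        B f g = (∫ t, f.eval t * g.eval t ∂μ) +
          ∑ r : (i : Fin p) × Fin (β i), ∑ s : (i : Fin p) × Fin (β i),
            M r s * (Polynomial.derivative^[(r.2 : ℕ)] f).eval (α r.1) *
              (Polynomial.derivative^[(s.2 : ℕ)] g).eval (α s.1) :=
  geronimus_is_discrete_sobolev_general p α hα β h hh μ hint B hsym hB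
end

section
/- Let μ be a measure on ℝ with finite moments, N ≥ 1, h(t) = t^N, dμ₀ = t^N dμ, and let B be a symmetric bilinear form on ℝ[t] with B(t^N f, g) = B(f, t^N g) = ∫ fg dμ₀. If the matrix (B(t^i,t^j) − ∫ t^{i+j} dμ)_{i,j=0}^{N−1}, conjugated by the diagonal matrix diag(1/0!,…,1/(N−1)!), is diagonal with entries M_0,…,M_{N−1}, then B(f,g) = ∫ fg dμ + Σ_{k=0}^{N−1} M_k f^{(k)}(0) g^{(k)}(0) for all polynomials f, g. -/
/-!
Both sides are bilinear forms on `ℝ[X]`, so it suffices to compare them on pairs of monomials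
`X ^ m`, `X ^ n`. If `m ≥ N` or `n ≥ N`, a factor `X ^ N` splits off: `B` is then an integral
against `t ^ N dμ`, and the derivative terms vanish because `(X ^ N * f)⁽ᵏ⁾(0) = 0` for `k < N`.
For `m, n < N` only the `N × N` block remains, where `(X ^ m)⁽ᵏ⁾(0) = k! δₘₖ` turns the hypothesis on
the conjugated matrix into exactly the required values.
-/

open Polynomial MeasureTheory

namespace Polynomial

variable {R : Type*}

theorem eval_zero_iterate_derivative [CommSemiring R] (p : R[X]) (k : ℕ) :
    (derivative^[k] p).eval 0 = (k.factorial : R) * p.coeff k := by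
  rw [← coeff_zero_eq_eval_zero, coeff_iterate_derivative, zero_add, Nat.descFactorial_self,
    nsmul_eq_mul]

theorem bilinear_ext_of_X_pow_mul [CommSemiring R] {P : Type*} [AddCommMonoid P] [Module R P]
    {B B' : R[X] →ₗ[R] R[X] →ₗ[R] P} (N : ℕ)
    (hleft : ∀ f g, B (X ^ N * f) g = B' (X ^ N * f) g)
    (hright : ∀ f g, B f (X ^ N * g) = B' f (X ^ N * g))
    (hblock : ∀ i j : Fin N, B (X ^ (i : ℕ)) (X ^ (j : ℕ)) = B' (X ^ (i : ℕ)) (X ^ (j : ℕ))) :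
    B = B' := by
  refine LinearMap.ext_basis (basisMonomials R) (basisMonomials R) fun m n => ?_
  simp only [coe_basisMonomials, monomial_one_right_eq_X_pow]
  rcases le_or_gt N m with hm | hm
  · obtain ⟨k, rfl⟩ := Nat.exists_eq_add_of_le hm
    rw [pow_add]
    exact hleft _ _
  rcases le_or_gt N n with hn | hn
  · obtain ⟨k, rfl⟩ := Nat.exists_eq_add_of_le hn
    rw [pow_add]
    exact hright _ _
  exact hblock ⟨m, hm⟩ ⟨n, hn⟩

section JetForm

variable [CommRing R]

noncomputable def iterateDerivativeAtZero (k : ℕ) : R[X] →ₗ[R] R :=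
  (leval 0).comp (derivative ^ k)

/-- `(f, g) ↦ ∑_{k < N} M k f⁽ᵏ⁾(0) g⁽ᵏ⁾(0)`. -/
noncomputable def jetForm (N : ℕ) (M : Fin N → R) : R[X] →ₗ[R] R[X] →ₗ[R] R :=
  ∑ k : Fin N, M k •
    (LinearMap.mul R R).compl₁₂ (iterateDerivativeAtZero k) (iterateDerivativeAtZero k)

variable (N : ℕ) (M : Fin N → R)

theorem jetForm_apply (f g : R[X]) :
    jetForm N M f g =
      ∑ k : Fin N, M k * (derivative^[k] f).eval 0 * (derivative^[k] g).eval 0 := by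
  simp [jetForm, iterateDerivativeAtZero, LinearMap.sum_apply, Module.End.pow_apply, mul_assoc]

theorem jetForm_X_pow_mul_left (f g : R[X]) : jetForm N M (X ^ N * f) g = 0 := by
  refine (jetForm_apply N M _ g).trans (Finset.sum_eq_zero fun k _ => ?_)
  rw [eval_zero_iterate_derivative, coeff_X_pow_mul', if_neg (by simp), mul_zero, mul_zero,
    zero_mul]

theorem jetForm_X_pow_mul_right (f g : R[X]) : jetForm N M f (X ^ N * g) = 0 := by
  refine (jetForm_apply N M f _).trans (Finset.sum_eq_zero fun k _ => ?_)
  rw [eval_zero_iterate_derivative (X ^ N * g), coeff_X_pow_mul', if_neg (by simp), mul_zero,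
    mul_zero]

theorem jetForm_X_pow_X_pow (i j : Fin N) :
    jetForm N M (X ^ (i : ℕ)) (X ^ (j : ℕ)) =
      if i = j then ((i : ℕ).factorial : R) ^ 2 * M i else 0 := by
  rw [jetForm_apply, Finset.sum_eq_single i]
  · simp only [eval_zero_iterate_derivative, coeff_X_pow, Fin.val_inj]
    split_ifs <;> simp_all
    ring
  · intro k _ hk
    simp [eval_zero_iterate_derivative, coeff_X_pow, Fin.val_inj, hk]
  · simp

end JetForm

section IntegralForm

variable (μ : Measure ℝ) (hint : ∀ f : ℝ[X], Integrable (fun t => f.eval t) μ)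

noncomputable def integralForm : ℝ[X] →ₗ[ℝ] ℝ[X] →ₗ[ℝ] ℝ :=
  LinearMap.mk₂ ℝ (fun f g => ∫ t, f.eval t * g.eval t ∂μ)
    (fun f₁ f₂ g => by simpa [add_mul] using integral_add (hint (f₁ * g)) (hint (f₂ * g)))
    (fun c f g => by simpa [mul_assoc] using integral_const_mul c (fun t => (f * g).eval t))
    (fun f g₁ g₂ => by simpa [mul_add] using integral_add (hint (f * g₁)) (hint (f * g₂)))
    (fun c f g => by simpa [mul_left_comm] using integral_const_mul c (fun t => (f * g).eval t))

theorem integralForm_apply (f g : ℝ[X]) :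
    integralForm μ hint f g = ∫ t, f.eval t * g.eval t ∂μ :=
  rfl

theorem integralForm_X_pow_mul_left (N : ℕ) (f g : ℝ[X]) :
    integralForm μ hint (X ^ N * f) g = ∫ t, f.eval t * g.eval t * t ^ N ∂μ := by
  simp only [integralForm_apply, eval_mul, eval_pow, eval_X]
  congr 1 with t
  ring

theorem integralForm_X_pow_mul_right (N : ℕ) (f g : ℝ[X]) :
    integralForm μ hint f (X ^ N * g) = ∫ t, f.eval t * g.eval t * t ^ N ∂μ := by
  simp only [integralForm_apply, eval_mul, eval_pow, eval_X]
  congr 1 with t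
  ring

theorem integralForm_X_pow_X_pow (i j : ℕ) :
    integralForm μ hint (X ^ i) (X ^ j) = ∫ t, t ^ (i + j) ∂μ := by
  simp only [integralForm_apply, eval_pow, eval_X, pow_add]

end IntegralForm

end Polynomial

theorem geronimus_tN_diagonal_sobolev_general (N : ℕ) (μ : Measure ℝ)
    (hint : ∀ f : Polynomial ℝ, Integrable (fun t => f.eval t) μ)
    (B : Polynomial ℝ →ₗ[ℝ] Polynomial ℝ →ₗ[ℝ] ℝ)
    (hB : ∀ f g, B ((X : Polynomial ℝ) ^ N * f) g = ∫ t, f.eval t * g.eval t * t ^ N ∂μ)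
    (hB' : ∀ f g, B f ((X : Polynomial ℝ) ^ N * g) = ∫ t, f.eval t * g.eval t * t ^ N ∂μ)
    (M : Fin N → ℝ)
    (hoffdiag : ∀ i j : Fin N, i ≠ j →
      B (X ^ (i : ℕ)) (X ^ (j : ℕ)) = ∫ t, t ^ ((i : ℕ) + (j : ℕ)) ∂μ)
    (hM : ∀ k : Fin N,
      B (X ^ (k : ℕ)) (X ^ (k : ℕ)) - (∫ t, t ^ (2 * (k : ℕ)) ∂μ)
        = ((Nat.factorial (k : ℕ) : ℝ)) ^ 2 * M k) :
    ∀ f g : Polynomial ℝ,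
      B f g = (∫ t, f.eval t * g.eval t ∂μ) +
        ∑ k : Fin N, M k * (Polynomial.derivative^[(k : ℕ)] f).eval 0 *
          (Polynomial.derivative^[(k : ℕ)] g).eval 0 := by
  have hBeq : B = integralForm μ hint + jetForm N M := by
    refine bilinear_ext_of_X_pow_mul N (fun f g => ?_) (fun f g => ?_) (fun i j => ?_)
    · rw [LinearMap.add_apply, LinearMap.add_apply, hB, integralForm_X_pow_mul_left,
        jetForm_X_pow_mul_left, add_zero]
    · rw [LinearMap.add_apply, LinearMap.add_apply, hB', integralForm_X_pow_mul_right,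
        jetForm_X_pow_mul_right, add_zero]
    · rw [LinearMap.add_apply, LinearMap.add_apply, integralForm_X_pow_X_pow, jetForm_X_pow_X_pow]
      split_ifs with hij
      · subst hij
        rw [← two_mul, ← hM]
        ring
      · rw [hoffdiag i j hij, add_zero]
  intro f g
  rw [hBeq, LinearMap.add_apply, LinearMap.add_apply, integralForm_apply, jetForm_apply]

theorem geronimus_tN_diagonal_sobolev (N : ℕ) (hN : 1 ≤ N) (μ : Measure ℝ)
    (hint : ∀ f : Polynomial ℝ, Integrable (fun t => f.eval t) μ)
    (B : Polynomial ℝ →ₗ[ℝ] Polynomial ℝ →ₗ[ℝ] ℝ)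
    (hsym : ∀ f g, B f g = B g f)
    (hB : ∀ f g, B ((X : Polynomial ℝ) ^ N * f) g = ∫ t, f.eval t * g.eval t * t ^ N ∂μ)
    (hB' : ∀ f g, B f ((X : Polynomial ℝ) ^ N * g) = ∫ t, f.eval t * g.eval t * t ^ N ∂μ)
    (M : Fin N → ℝ)
    (hoffdiag : ∀ i j : Fin N, i ≠ j →
      B (X ^ (i : ℕ)) (X ^ (j : ℕ)) = ∫ t, t ^ ((i : ℕ) + (j : ℕ)) ∂μ)
    (hM : ∀ k : Fin N,
      B (X ^ (k : ℕ)) (X ^ (k : ℕ)) - (∫ t, t ^ (2 * (k : ℕ)) ∂μ)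
        = ((Nat.factorial (k : ℕ) : ℝ)) ^ 2 * M k) :
    ∀ f g : Polynomial ℝ,
      B f g = (∫ t, f.eval t * g.eval t ∂μ) +
        ∑ k : Fin N, M k * (Polynomial.derivative^[(k : ℕ)] f).eval 0 *
          (Polynomial.derivative^[(k : ℕ)] g).eval 0 :=
  geronimus_tN_diagonal_sobolev_general N μ hint B hB hB' M hoffdiag hM
end

section
/- Let B be a quasi-definite symmetric bilinear form on ℝ[t] satisfying B(hf,g) = B(f,hg) = (f,g)₀ where ( , )₀ is a quasi-definite bilinear form with monic orthogonal polynomials {P_n}, and h is monic of degree N. If {P_n^*} are the monic orthogonal polynomials for B, then for every n ≥ N there exist real numbers A_{n−1}^{[n]},…,A_{n−N}^{[n]} such that P_n^*(t) = P_n(t) + A_{n−1}^{[n]} P_{n−1}(t) + ⋯ + A_{n−N}^{[n]} P_{n−N}(t). -/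
/-!
Both `Pstar n` and `P n` are monic of degree `n`, so their difference `d` has degree `< n`.
For `m < n - N` the polynomial `h * P m` has degree `< n`, hence
`B₀ (Pstar n) (P m) = B (Pstar n) (h * P m) = 0`, while `B₀ (P n) (P m) = 0`; so `d` is
`B₀`-orthogonal to `P 0, …, P (n - N - 1)`. Expanding `d` in the basis `(P m)` and pairing with
`P m` in increasing order of `m` kills the coefficients of `P 0, …, P (n - N - 1)` one at a time,
since `B₀ (P j) (P m) = 0` for `j > m` and `B₀ (P m) (P m) ≠ 0`.
-/

open Polynomial Finset

namespace Polynomial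

variable {K : Type*} [Field K] {P : ℕ → K[X]}

theorem exists_eq_sum_range_of_degree_lt (hPdeg : ∀ n, (P n).degree = n) {n : ℕ} {p : K[X]}
    (hp : p.degree < n) : ∃ c : ℕ → K, p = ∑ m ∈ range n, C (c m) * P m := by
  let S : Sequence K := ⟨P, hPdeg⟩
  have hspan := S.span_degreeLT (m := n) fun i _ ↦
    (leadingCoeff_ne_zero.2 (S.ne_zero i)).isUnit
  have hmem : p ∈ Submodule.span K (P '' ↑(range n)) := by
    rw [coe_range]
    exact hspan ▸ mem_degreeLT.2 hp
  obtain ⟨c, hc⟩ := (Submodule.mem_span_image_finset_iff_exists_fun' K).1 hmem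
  exact ⟨c, by simp only [← hc, smul_eq_C_mul]⟩

variable (B : K[X] →ₗ[K] K[X] →ₗ[K] K) (hPdeg : ∀ n, (P n).degree = n)
  (hPorth : ∀ n : ℕ, ∀ q : K[X], q.degree < n → B (P n) q = 0)
  (hPnd : ∀ n, B (P n) (P n) ≠ 0)
include hPdeg hPorth hPnd

theorem coeff_eq_zero_of_forall_lt_apply_eq_zero {c : ℕ → K} {s : Finset ℕ} {k : ℕ}
    (horth : ∀ m < k, B (∑ j ∈ s, C (c j) * P j) (P m) = 0) :
    ∀ m ∈ s, m < k → c m = 0 := by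
  intro m
  induction m using Nat.strong_induction_on with
  | _ m ih =>
    intro hms hmk
    have hpair : B (∑ j ∈ s, C (c j) * P j) (P m) = c m * B (P m) (P m) := by
      simp only [← smul_eq_C_mul, map_sum, map_smul, LinearMap.smul_apply, LinearMap.sum_apply,
        smul_eq_mul]
      refine sum_eq_single_of_mem m hms fun j hjs hjm ↦ ?_
      rcases hjm.lt_or_gt with hlt | hgt
      · rw [ih j hlt hjs (hlt.trans hmk), zero_mul]
      · rw [hPorth j (P m) (by rw [hPdeg]; exact_mod_cast hgt), mul_zero]
    exact (mul_eq_zero.1 (hpair ▸ horth m hmk)).resolve_right (hPnd m)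

theorem exists_eq_sum_of_forall_lt_apply_eq_zero {n N : ℕ} (hNn : N ≤ n) {p : K[X]}
    (hp : p.degree < n) (horth : ∀ m < n - N, B p (P m) = 0) :
    ∃ A : Fin N → K, p = ∑ k : Fin N, C (A k) * P (n - 1 - k) := by
  obtain ⟨c, rfl⟩ := exists_eq_sum_range_of_degree_lt hPdeg hp
  have hlow := coeff_eq_zero_of_forall_lt_apply_eq_zero B hPdeg hPorth hPnd horth
  refine ⟨fun k ↦ c (n - 1 - k), ?_⟩
  rw [Fin.sum_univ_eq_sum_range (fun k ↦ C (c (n - 1 - k)) * P (n - 1 - k)),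
    ← sum_range_add_sum_Ico _ (Nat.sub_le n N), sum_Ico_eq_sum_range,
    Nat.sub_sub_self hNn,
    ← sum_range_reflect (fun k ↦ C (c (n - N + k)) * P (n - N + k)) N]
  have hzero : ∑ m ∈ range (n - N), C (c m) * P m = 0 :=
    sum_eq_zero fun m hm ↦ by
      rw [hlow m (mem_range.2 (by grind)) (mem_range.1 hm), map_zero, zero_mul]
  rw [hzero, zero_add]
  exact sum_congr rfl fun j hj ↦ by
    rw [show n - N + (N - 1 - j) = n - 1 - j by grind]

end Polynomial

theorem geronimus_connection_formula_general (N : ℕ)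
    (h : Polynomial ℝ) (hmonic : h.Monic) (hdeg : h.natDegree = N)
    (B₀ B : Polynomial ℝ →ₗ[ℝ] Polynomial ℝ →ₗ[ℝ] ℝ)
    (hrel' : ∀ f g, B f (h * g) = B₀ f g)
    (P Pstar : ℕ → Polynomial ℝ)
    (hPmonic : ∀ n, (P n).Monic) (hPdeg : ∀ n, (P n).natDegree = n)
    (hPorth : ∀ n : ℕ, ∀ q : Polynomial ℝ, q.degree < n → B₀ (P n) q = 0)
    (hPnd : ∀ n, B₀ (P n) (P n) ≠ 0)
    (hQmonic : ∀ n, (Pstar n).Monic) (hQdeg : ∀ n, (Pstar n).natDegree = n)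
    (hQorth : ∀ n : ℕ, ∀ q : Polynomial ℝ, q.degree < n → B (Pstar n) q = 0) :
    ∀ n, N ≤ n → ∃ A : Fin N → ℝ,
      Pstar n = P n + ∑ k : Fin N, C (A k) * P (n - 1 - (k : ℕ)) := by
  intro n hNn
  have hPdeg' : ∀ m, (P m).degree = m := fun m ↦ by
    rw [degree_eq_natDegree (hPmonic m).ne_zero, hPdeg]
  have hQdeg' : (Pstar n).degree = n := by rw [degree_eq_natDegree (hQmonic n).ne_zero, hQdeg]
  have hdiff : (Pstar n - P n).degree < n := hQdeg' ▸
    degree_sub_lt_left (hQdeg'.trans (hPdeg' n).symm) (hQmonic n).ne_zero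
      (by rw [(hQmonic n).leadingCoeff, (hPmonic n).leadingCoeff])
  have horth : ∀ m < n - N, B₀ (Pstar n - P n) (P m) = 0 := fun m hm ↦ by
    have hQ : B₀ (Pstar n) (P m) = 0 := by
      rw [← hrel']
      refine hQorth n _ ?_
      rw [degree_mul, degree_eq_natDegree hmonic.ne_zero, hdeg, hPdeg']
      exact_mod_cast (by omega : N + m < n)
    have hP : B₀ (P n) (P m) = 0 := hPorth n _ (by rw [hPdeg']; exact_mod_cast (by omega))
    rw [map_sub, LinearMap.sub_apply, hQ, hP, sub_zero]
  obtain ⟨A, hA⟩ :=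
    exists_eq_sum_of_forall_lt_apply_eq_zero B₀ hPdeg' hPorth hPnd hNn hdiff horth
  exact ⟨A, by rw [← hA, add_sub_cancel]⟩

theorem geronimus_connection_formula (N : ℕ) (hN : 1 ≤ N)
    (h : Polynomial ℝ) (hmonic : h.Monic) (hdeg : h.natDegree = N)
    (B₀ B : Polynomial ℝ →ₗ[ℝ] Polynomial ℝ →ₗ[ℝ] ℝ)
    (hsym₀ : ∀ f g, B₀ f g = B₀ g f) (hsym : ∀ f g, B f g = B g f)
    (hrel : ∀ f g, B (h * f) g = B₀ f g) (hrel' : ∀ f g, B f (h * g) = B₀ f g)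
    (P Pstar : ℕ → Polynomial ℝ)
    (hPmonic : ∀ n, (P n).Monic) (hPdeg : ∀ n, (P n).natDegree = n)
    (hPorth : ∀ n : ℕ, ∀ q : Polynomial ℝ, q.degree < n → B₀ (P n) q = 0)
    (hPnd : ∀ n, B₀ (P n) (P n) ≠ 0)
    (hQmonic : ∀ n, (Pstar n).Monic) (hQdeg : ∀ n, (Pstar n).natDegree = n)
    (hQorth : ∀ n : ℕ, ∀ q : Polynomial ℝ, q.degree < n → B (Pstar n) q = 0)
    (hQnd : ∀ n, B (Pstar n) (Pstar n) ≠ 0) :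
    ∀ n, N ≤ n → ∃ A : Fin N → ℝ,
      Pstar n = P n + ∑ k : Fin N, C (A k) * P (n - 1 - (k : ℕ)) :=
  geronimus_connection_formula_general N h hmonic hdeg B₀ B hrel' P Pstar hPmonic hPdeg hPorth hPnd
    hQmonic hQdeg hQorth
end

section
/- Let μ be a measure with hdμ = dμ₀, let {R_n} be the monic orthogonal polynomials for μ and {P_n} the monic orthogonal polynomials for μ₀, where h is monic of degree N. Then h(t) P_n(t) = Σ_{k=n}^{n+N} b_k^{[n]} R_k(t), i.e., the expansion coefficients of h·P_n in the basis {R_k} vanish for indices k < n. -/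
/-!
Expand `h * P n` in the basis `R k`. Orthogonality of the `R k` makes the coefficient of `R k`
equal to `∫ h P_n R_k dμ / ∫ R_k² dμ = ∫ P_n R_k dμ₀ / ∫ R_k² dμ`, which vanishes for `k < n`
because `P n` is `μ₀`-orthogonal to `R k`, and for `k > n + N` because `R k` is `μ`-orthogonal to
`h * P n`, of degree at most `n + N`.
-/

open Polynomial MeasureTheory

namespace Polynomial.Sequence

variable {K : Type*} [Field K] (S : Sequence K)

lemma isUnit_leadingCoeff (i : ℕ) : IsUnit (S i).leadingCoeff :=
  isUnit_iff_ne_zero.mpr (leadingCoeff_ne_zero.mpr (S.ne_zero i))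

lemma sum_repr_smul_eq_of_support_subset (q : K[X]) {s : Finset ℕ}
    (hs : ((S.basis S.isUnit_leadingCoeff).repr q).support ⊆ s) :
    ∑ i ∈ s, (S.basis S.isUnit_leadingCoeff).repr q i • S i = q := by
  conv_rhs => rw [← (S.basis S.isUnit_leadingCoeff).linearCombination_repr q]
  rw [Finsupp.linearCombination_apply, Finsupp.sum_of_support_subset _ hs _ (by simp)]
  simp only [basis_eq_self]

variable {L : K[X] →ₗ[K] K} (hS : ∀ (n : ℕ) (q : K[X]), q.degree < n → L (S n * q) = 0)
include hS

lemma apply_mul_eq_zero_of_ne {i k : ℕ} (hik : i ≠ k) : L (S i * S k) = 0 := by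
  rcases hik.lt_or_gt with hlt | hlt
  · rw [mul_comm]
    exact hS k (S i) (by simpa using hlt)
  · exact hS i (S k) (by simpa using hlt)

lemma apply_mul_eq_repr_mul (q : K[X]) (k : ℕ) :
    L (q * S k) = (S.basis S.isUnit_leadingCoeff).repr q k * L (S k * S k) := by
  conv_lhs => rw [← S.sum_repr_smul_eq_of_support_subset q subset_rfl]
  simp only [Finset.sum_mul, map_sum, smul_mul_assoc, map_smul, smul_eq_mul]
  refine Finset.sum_eq_single k (fun i _ hik => ?_) (fun hk => ?_)
  · rw [S.apply_mul_eq_zero_of_ne hS hik, mul_zero]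
  · rw [Finsupp.notMem_support_iff.mp hk, zero_mul]

theorem exists_eq_sum_Icc_of_orthogonal (hL : ∀ k, L (S k * S k) ≠ 0) {q : K[X]} {n m : ℕ}
    (hq : q.natDegree ≤ m) (horth : ∀ r : K[X], r.degree < n → L (q * r) = 0) :
    ∃ b : ℕ → K, q = ∑ k ∈ Finset.Icc n m, C (b k) * S k := by
  set c := (S.basis S.isUnit_leadingCoeff).repr q
  have hc : ∀ k, L (q * S k) = 0 → c k = 0 := fun k hk =>
    (mul_eq_zero.mp ((S.apply_mul_eq_repr_mul hS q k).symm.trans hk)).resolve_right (hL k)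
  have hsupp : c.support ⊆ Finset.Icc n m := by
    intro k hk
    rw [Finsupp.mem_support_iff] at hk
    rw [Finset.mem_Icc]
    by_contra hout
    refine hk (hc k ?_)
    rcases not_and_or.mp hout with hkn | hkm
    · exact horth (S k) (by simpa using not_le.mp hkn)
    · rw [mul_comm]
      exact hS k q ((degree_le_of_natDegree_le hq).trans_lt (by exact_mod_cast not_le.mp hkm))
  refine ⟨c, ?_⟩
  simp_rw [← smul_eq_C_mul]
  exact (S.sum_repr_smul_eq_of_support_subset q hsupp).symm

end Polynomial.Sequence

noncomputable def MeasureTheory.Measure.momentFunctional (μ : Measure ℝ)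
    (hint : ∀ f : ℝ[X], Integrable (fun t => f.eval t) μ) : ℝ[X] →ₗ[ℝ] ℝ where
  toFun f := ∫ t, f.eval t ∂μ
  map_add' f g := by simp only [eval_add]; exact integral_add (hint f) (hint g)
  map_smul' c f := by simp only [eval_smul, integral_smul, RingHom.id_apply]

lemma MeasureTheory.Measure.momentFunctional_apply (μ : Measure ℝ)
    (hint : ∀ f : ℝ[X], Integrable (fun t => f.eval t) μ) (f : ℝ[X]) :
    μ.momentFunctional hint f = ∫ t, f.eval t ∂μ := rfl

theorem hPn_expansion_in_R_general (N : ℕ)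
    (h : Polynomial ℝ) (hdeg : h.natDegree = N)
    (μ : Measure ℝ) (hint : ∀ f : Polynomial ℝ, Integrable (fun t => f.eval t) μ)
    (R P : ℕ → Polynomial ℝ)
    (hRmonic : ∀ n, (R n).Monic) (hRdeg : ∀ n, (R n).natDegree = n)
    (hRorth : ∀ n : ℕ, ∀ q : Polynomial ℝ, q.degree < n →
      ∫ t, (R n).eval t * q.eval t ∂μ = 0)
    (hRpos : ∀ n, 0 < ∫ t, (R n).eval t ^ 2 ∂μ)
    (hPdeg : ∀ n, (P n).natDegree = n)
    (hPorth : ∀ n : ℕ, ∀ q : Polynomial ℝ, q.degree < n →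
      ∫ t, (P n).eval t * q.eval t * h.eval t ∂μ = 0) :
    ∀ n, ∃ b : ℕ → ℝ,
      h * P n = ∑ k ∈ Finset.Icc n (n + N), C (b k) * R k := by
  intro n
  let S : Sequence ℝ :=
    ⟨R, fun k => by rw [degree_eq_natDegree (hRmonic k).ne_zero, hRdeg]⟩
  have hSR : ∀ k, S k = R k := fun _ => rfl
  have hdegree : (h * P n).natDegree ≤ n + N :=
    natDegree_mul_le.trans (by rw [hdeg, hPdeg]; omega)
  refine S.exists_eq_sum_Icc_of_orthogonal (L := μ.momentFunctional hint) ?_ ?_ hdegree ?_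
  · simpa only [hSR, Measure.momentFunctional_apply, eval_mul] using hRorth
  · intro k
    simpa only [hSR, Measure.momentFunctional_apply, eval_mul, sq] using (hRpos k).ne'
  · intro r hr
    simpa only [Measure.momentFunctional_apply, eval_mul, mul_comm, mul_left_comm]
      using hPorth n r hr

theorem hPn_expansion_in_R (N : ℕ) (hN : 1 ≤ N)
    (h : Polynomial ℝ) (hmonic : h.Monic) (hdeg : h.natDegree = N)
    (μ : Measure ℝ) (hint : ∀ f : Polynomial ℝ, Integrable (fun t => f.eval t) μ)
    (R P : ℕ → Polynomial ℝ)
    (hRmonic : ∀ n, (R n).Monic) (hRdeg : ∀ n, (R n).natDegree = n)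
    (hRorth : ∀ n : ℕ, ∀ q : Polynomial ℝ, q.degree < n →
      ∫ t, (R n).eval t * q.eval t ∂μ = 0)
    (hRpos : ∀ n, 0 < ∫ t, (R n).eval t ^ 2 ∂μ)
    (hPmonic : ∀ n, (P n).Monic) (hPdeg : ∀ n, (P n).natDegree = n)
    (hPorth : ∀ n : ℕ, ∀ q : Polynomial ℝ, q.degree < n →
      ∫ t, (P n).eval t * q.eval t * h.eval t ∂μ = 0)
    (hPpos : ∀ n, 0 < ∫ t, (P n).eval t ^ 2 * h.eval t ∂μ) :
    ∀ n, ∃ b : ℕ → ℝ,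
      h * P n = ∑ k ∈ Finset.Icc n (n + N), C (b k) * R k :=
  hPn_expansion_in_R_general N h hdeg μ hint R P hRmonic hRdeg hRorth hRpos hPdeg hPorth
end

section
/- Let h be monic of degree N, μ a positive measure with hdμ = dμ₀, {R_n} the monic orthogonal polynomials for μ, and {P_n^*} the monic orthogonal polynomials for a quasi-definite multiple Geronimus transform B of μ₀ (B(hf,g)=∫fg dμ₀). Then for each n there exist real numbers B_j^{[n]} with h(t) P_n^*(t) = R_{n+N}(t) + B_{n+N−1}^{[n]} R_{n+N−1}(t) + ⋯ + B_{n−N}^{[n]} R_{n−N}(t); in particular the coefficient of R_k in the expansion of h·P_n^* vanishes for k < n − N, and equivalently ∫ P_{n+N}^* R_k dμ₀ = 0 for all k < n. -/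
/-!
Since `h` and `P*ₙ` are monic, `h P*ₙ - R_{n+N}` has degree `< n + N`, so it is a combination
of `R₀, …, R_{n+N-1}`, and the coefficient of `R_k` is `∫ h P*ₙ R_k dμ / ∫ R_k² dμ`.
For `N + k < n` the numerator is `B(P*ₙ, h R_k) = 0`, because `h R_k` has degree `N + k < n` and `P*ₙ` is
`B`-orthogonal to lower degrees.
-/

open Polynomial MeasureTheory

section OrthogonalExpansion

variable {K M ι : Type*} [Field K] [AddCommGroup M] [Module K M]
  {L : M →ₗ[K] M →ₗ[K] K} {v : ι → M}

theorem LinearMap.apply_sum_smul_of_pairwise (horth : Pairwise fun i j => L (v i) (v j) = 0)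
    {s : Finset ι} (c : ι → K) {k : ι} (hk : k ∈ s) :
    L (∑ i ∈ s, c i • v i) (v k) = c k * L (v k) (v k) := by
  simp only [map_sum, map_smul, LinearMap.sum_apply, LinearMap.smul_apply, smul_eq_mul]
  refine Finset.sum_eq_single_of_mem k hk fun j _ hjk => ?_
  rw [horth hjk, mul_zero]

theorem LinearMap.sum_smul_eq_sum_smul_of_apply_eq_zero
    (horth : Pairwise fun i j => L (v i) (v j) = 0) (hnd : ∀ k, L (v k) (v k) ≠ 0)
    {s t : Finset ι} (hts : t ⊆ s) (c : ι → K)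
    (hvanish : ∀ k ∈ s, k ∉ t → L (∑ i ∈ s, c i • v i) (v k) = 0) :
    ∑ i ∈ s, c i • v i = ∑ i ∈ t, c i • v i := by
  refine (Finset.sum_subset hts fun k hks hkt => ?_).symm
  have hck : c k * L (v k) (v k) = 0 := by
    rw [← apply_sum_smul_of_pairwise horth c hks, hvanish k hks hkt]
  rw [(mul_eq_zero.mp hck).resolve_right (hnd k), zero_smul]

end OrthogonalExpansion

namespace Polynomial

theorem Monic.degree_sub_lt_of_natDegree_eq {A : Type*} [Ring A] [Nontrivial A] {p q : A[X]}
    (hp : p.Monic) (hq : q.Monic) (hpq : p.natDegree = q.natDegree) :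
    (p - q).degree < q.natDegree := by
  rw [← degree_eq_natDegree hq.ne_zero]
  refine degree_sub_lt_right ?_ hq.ne_zero (by rw [hp.leadingCoeff, hq.leadingCoeff])
  rw [degree_eq_natDegree hp.ne_zero, degree_eq_natDegree hq.ne_zero, hpq]

theorem exists_sum_range_smul_eq_of_degree_lt {K : Type*} [Field K] {R : ℕ → K[X]}
    (hR : ∀ k, (R k).degree = k) {m : ℕ} {p : K[X]} (hp : p.degree < m) :
    ∃ c : ℕ → K, ∑ k ∈ Finset.range m, c k • R k = p := by
  let S : Sequence K := ⟨R, hR⟩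
  have hspan := S.span_degreeLT (m := m) fun i _ => (leadingCoeff_ne_zero.mpr (S.ne_zero i)).isUnit
  rw [← Finset.coe_range] at hspan
  exact (Submodule.mem_span_image_finset_iff_exists_fun' K).mp (hspan ▸ mem_degreeLT.mpr hp)

theorem integrable_eval_mul_eval {μ : Measure ℝ}
    (hint : ∀ f : ℝ[X], Integrable (fun t => f.eval t) μ) (f g : ℝ[X]) :
    Integrable (fun t => f.eval t * g.eval t) μ := by
  simpa only [eval_mul] using hint (f * g)

noncomputable def integralBilin (μ : Measure ℝ)
    (hint : ∀ f : ℝ[X], Integrable (fun t => f.eval t) μ) : ℝ[X] →ₗ[ℝ] ℝ[X] →ₗ[ℝ] ℝ :=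
  LinearMap.mk₂ ℝ (fun f g => ∫ t, f.eval t * g.eval t ∂μ)
    (fun f₁ f₂ g => by
      simp only [eval_add, add_mul]
      exact integral_add (integrable_eval_mul_eval hint _ _) (integrable_eval_mul_eval hint _ _))
    (fun a f g => by
      simp only [eval_smul, smul_eq_mul, mul_assoc]
      exact integral_const_mul a _)
    (fun f g₁ g₂ => by
      simp only [eval_add, mul_add]
      exact integral_add (integrable_eval_mul_eval hint _ _) (integrable_eval_mul_eval hint _ _))
    (fun a f g => by
      simp only [eval_smul, smul_eq_mul, mul_left_comm _ a]
      exact integral_const_mul a _)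

@[simp]
theorem integralBilin_apply (μ : Measure ℝ)
    (hint : ∀ f : ℝ[X], Integrable (fun t => f.eval t) μ) (f g : ℝ[X]) :
    integralBilin μ hint f g = ∫ t, f.eval t * g.eval t ∂μ :=
  rfl

variable {μ : Measure ℝ} {R : ℕ → ℝ[X]}

theorem pairwise_integral_eq_zero_of_orthogonal (hR : ∀ k, (R k).degree = k)
    (horth : ∀ n : ℕ, ∀ q : ℝ[X], q.degree < n → ∫ t, (R n).eval t * q.eval t ∂μ = 0) :
    Pairwise fun j k => ∫ t, (R j).eval t * (R k).eval t ∂μ = 0 := by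
  intro j k hjk
  rcases hjk.lt_or_gt with hlt | hgt
  · simp_rw [mul_comm ((R j).eval _)]
    exact horth k (R j) (by rw [hR]; exact_mod_cast hlt)
  · exact horth j (R k) (by rw [hR]; exact_mod_cast hgt)

theorem exists_eq_sum_Ico_smul_of_integral_eq_zero
    (hint : ∀ f : ℝ[X], Integrable (fun t => f.eval t) μ) (hR : ∀ k, (R k).degree = k)
    (horth : ∀ n : ℕ, ∀ q : ℝ[X], q.degree < n → ∫ t, (R n).eval t * q.eval t ∂μ = 0)
    (hnd : ∀ k, ∫ t, (R k).eval t ^ 2 ∂μ ≠ 0) {l m : ℕ} {p : ℝ[X]} (hp : p.degree < m)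
    (hvanish : ∀ k < l, ∫ t, p.eval t * (R k).eval t ∂μ = 0) :
    ∃ c : ℕ → ℝ, p = ∑ k ∈ Finset.Ico l m, c k • R k := by
  obtain ⟨c, rfl⟩ := exists_sum_range_smul_eq_of_degree_lt hR hp
  refine ⟨c, LinearMap.sum_smul_eq_sum_smul_of_apply_eq_zero (L := integralBilin μ hint)
    (pairwise_integral_eq_zero_of_orthogonal hR horth) (fun k => ?_) ?_ c
    fun k hkm hk => hvanish k ?_⟩
  · simpa only [integralBilin_apply, sq] using hnd k
  · exact fun k hk => Finset.mem_range.mpr (Finset.mem_Ico.mp hk).2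
  · simp only [Finset.mem_Ico, Finset.mem_range] at hkm hk
    omega

end Polynomial

theorem hPstar_expansion_in_R_general (N : ℕ)
    (h : Polynomial ℝ) (hmonic : h.Monic) (hdeg : h.natDegree = N)
    (μ : Measure ℝ) (hint : ∀ f : Polynomial ℝ, Integrable (fun t => f.eval t) μ)
    (R : ℕ → Polynomial ℝ)
    (hRmonic : ∀ n, (R n).Monic) (hRdeg : ∀ n, (R n).natDegree = n)
    (hRorth : ∀ n : ℕ, ∀ q : Polynomial ℝ, q.degree < n →
      ∫ t, (R n).eval t * q.eval t ∂μ = 0)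
    (hRpos : ∀ n, 0 < ∫ t, (R n).eval t ^ 2 ∂μ)
    (B : Polynomial ℝ →ₗ[ℝ] Polynomial ℝ →ₗ[ℝ] ℝ)
    (hrel' : ∀ f g, B f (h * g) = ∫ t, f.eval t * g.eval t * h.eval t ∂μ)
    (Pstar : ℕ → Polynomial ℝ)
    (hQmonic : ∀ n, (Pstar n).Monic) (hQdeg : ∀ n, (Pstar n).natDegree = n)
    (hQorth : ∀ n : ℕ, ∀ q : Polynomial ℝ, q.degree < n → B (Pstar n) q = 0) :
    ∀ n : ℕ,
      (∃ b : ℕ → ℝ, h * Pstar n =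
        R (n + N) + ∑ k ∈ Finset.Ico (n - N) (n + N), C (b k) * R k) ∧
      (∀ k < n, ∫ t, (Pstar (n + N)).eval t * (R k).eval t * h.eval t ∂μ = 0) := by
  have hRdeg' (k : ℕ) : (R k).degree = k := by rw [degree_eq_natDegree (hRmonic k).ne_zero, hRdeg]
  have hvanish (n k : ℕ) (hk : N + k < n) :
      ∫ t, (Pstar n).eval t * (R k).eval t * h.eval t ∂μ = 0 := by
    rw [← hrel']
    refine hQorth n _ (degree_le_natDegree.trans_lt ?_)
    rw [hmonic.natDegree_mul (hRmonic k), hdeg, hRdeg]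
    exact_mod_cast hk
  intro n
  refine ⟨?_, fun k hk => hvanish (n + N) k (by omega)⟩
  have hlt := (hmonic.mul (hQmonic n)).degree_sub_lt_of_natDegree_eq (hRmonic (n + N))
    (by rw [hmonic.natDegree_mul (hQmonic n), hdeg, hQdeg, hRdeg, add_comm])
  rw [hRdeg] at hlt
  obtain ⟨c, hc⟩ := exists_eq_sum_Ico_smul_of_integral_eq_zero (l := n - N) hint hRdeg' hRorth
    (fun k => (hRpos k).ne') hlt fun k hk => by
      have hhP : ∫ t, (h * Pstar n).eval t * (R k).eval t ∂μ = 0 := by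
        rw [← hvanish n k (by omega)]
        congr 1 with t
        rw [eval_mul]
        ring
      have hR : ∫ t, (R (n + N)).eval t * (R k).eval t ∂μ = 0 :=
        hRorth _ _ (by rw [hRdeg']; exact_mod_cast (by omega : k < n + N))
      rw [← integralBilin_apply μ hint, map_sub, LinearMap.sub_apply, integralBilin_apply,
        integralBilin_apply, hhP, hR, sub_zero]
  exact ⟨c, by simpa only [C_mul'] using eq_add_of_sub_eq' hc⟩

theorem hPstar_expansion_in_R (N : ℕ) (hN : 1 ≤ N)
    (h : Polynomial ℝ) (hmonic : h.Monic) (hdeg : h.natDegree = N)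
    (μ : Measure ℝ) (hint : ∀ f : Polynomial ℝ, Integrable (fun t => f.eval t) μ)
    (R : ℕ → Polynomial ℝ)
    (hRmonic : ∀ n, (R n).Monic) (hRdeg : ∀ n, (R n).natDegree = n)
    (hRorth : ∀ n : ℕ, ∀ q : Polynomial ℝ, q.degree < n →
      ∫ t, (R n).eval t * q.eval t ∂μ = 0)
    (hRpos : ∀ n, 0 < ∫ t, (R n).eval t ^ 2 ∂μ)
    (B : Polynomial ℝ →ₗ[ℝ] Polynomial ℝ →ₗ[ℝ] ℝ)
    (hsym : ∀ f g, B f g = B g f)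
    (hrel : ∀ f g, B (h * f) g = ∫ t, f.eval t * g.eval t * h.eval t ∂μ)
    (hrel' : ∀ f g, B f (h * g) = ∫ t, f.eval t * g.eval t * h.eval t ∂μ)
    (Pstar : ℕ → Polynomial ℝ)
    (hQmonic : ∀ n, (Pstar n).Monic) (hQdeg : ∀ n, (Pstar n).natDegree = n)
    (hQorth : ∀ n : ℕ, ∀ q : Polynomial ℝ, q.degree < n → B (Pstar n) q = 0)
    (hQnd : ∀ n, B (Pstar n) (Pstar n) ≠ 0) :
    ∀ n : ℕ,
      (∃ b : ℕ → ℝ, h * Pstar n =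
        R (n + N) + ∑ k ∈ Finset.Ico (n - N) (n + N), C (b k) * R k) ∧
      (∀ k < n, ∫ t, (Pstar (n + N)).eval t * (R k).eval t * h.eval t ∂μ = 0) :=
  hPstar_expansion_in_R_general N h hmonic hdeg μ hint R hRmonic hRdeg hRorth hRpos B hrel' Pstar
    hQmonic hQdeg hQorth
end

section
/- In the multiple Geronimus setting with both ( , )₀ and B positive definite (B(hf,g)=B(f,hg)=(f,g)₀, h monic of degree N), the norms satisfy (h*_{n+N})² := B(P_{n+N}^*, P_{n+N}^*) = A_n^{[n+N]} · ‖P_n‖₀², where A_n^{[n+N]} is the coefficient of P_n in the expansion P_{n+N}^* = P_{n+N} + Σ_{k=1}^{N} A_{n+N−k}^{[n+N]} P_{n+N−k} and ‖P_n‖₀² = (P_n,P_n)₀. -/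
/-!
Write `m = n + N`. Since `h * P n` and `P*_m` are both monic of degree `m`, their difference has
degree `< m` and is `B`-orthogonal to `P*_m`; hence `B(P*_m, P*_m) = B(P*_m, h P_n) = (P*_m, P_n)₀`.
Expanding `P*_m` in the `P_j`, only the term `A_n^{[m]} P_n` survives the pairing with `P_n`.
-/

open Polynomial

namespace Polynomial

variable {R : Type*} [CommRing R]

theorem Monic.degree_sub_lt [Nontrivial R] {p q : R[X]} (hp : p.Monic) (hq : q.Monic)
    (hdeg : p.natDegree = q.natDegree) : (p - q).degree < p.natDegree := by
  have hp_deg := degree_eq_natDegree hp.ne_zero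
  have hlt := degree_sub_lt_left (p := p) (q := q)
    (by rw [hp_deg, degree_eq_natDegree hq.ne_zero, hdeg]) hp.ne_zero
    (by rw [hp.leadingCoeff, hq.leadingCoeff])
  rwa [hp_deg] at hlt

variable (B : R[X] →ₗ[R] R[X] →ₗ[R] R)

theorem apply_self_eq_apply_of_monic [Nontrivial R] {p q : R[X]} (hp : p.Monic) (hq : q.Monic)
    (hdeg : p.natDegree = q.natDegree)
    (horth : ∀ r : R[X], r.degree < p.natDegree → B p r = 0) :
    B p p = B p q := by
  have hsub := hq.degree_sub_lt hp hdeg.symm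
  rw [← hdeg] at hsub
  have hzero := horth _ hsub
  rw [map_sub, sub_eq_zero] at hzero
  exact hzero.symm

theorem apply_sum_C_mul_eq_of_orthogonal {ι : Type*} {s : Finset ι} {i₀ : ι} (hi₀ : i₀ ∈ s)
    (c : ι → R) (P : ι → R[X]) (p : R[X])
    (horth : ∀ i ∈ s, i ≠ i₀ → B (P i) p = 0) :
    B (∑ i ∈ s, C (c i) * P i) p = c i₀ * B (P i₀) p := by
  simp_rw [← smul_eq_C_mul, map_sum, map_smul, LinearMap.sum_apply,
    LinearMap.smul_apply, smul_eq_mul]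
  exact Finset.sum_eq_single_of_mem i₀ hi₀ fun i hi hne => by rw [horth i hi hne, mul_zero]

end Polynomial

theorem norm_of_Pstar_general (N : ℕ) (hN : 1 ≤ N)
    (h : Polynomial ℝ) (hmonic : h.Monic) (hdeg : h.natDegree = N)
    (B₀ B : Polynomial ℝ →ₗ[ℝ] Polynomial ℝ →ₗ[ℝ] ℝ)
    (hrel' : ∀ f g, B f (h * g) = B₀ f g)
    (P : ℕ → Polynomial ℝ)
    (hPmonic : ∀ n, (P n).Monic) (hPdeg : ∀ n, (P n).natDegree = n)
    (hPorth : ∀ n : ℕ, ∀ q : Polynomial ℝ, q.degree < n → B₀ (P n) q = 0)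
    (Pstar : ℕ → Polynomial ℝ)
    (hQmonic : ∀ n, (Pstar n).Monic) (hQdeg : ∀ n, (Pstar n).natDegree = n)
    (hQorth : ∀ n : ℕ, ∀ q : Polynomial ℝ, q.degree < n → B (Pstar n) q = 0)
    (A : ℕ → ℕ → ℝ)
    (hPstar : ∀ n, Pstar n =
      P n + ∑ k ∈ Finset.Icc 1 (min N n), C (A (n - k) n) * P (n - k)) :
    ∀ n : ℕ, B (Pstar (n + N)) (Pstar (n + N)) = A n (n + N) * B₀ (P n) (P n) := by
  intro n
  have hPorth_lt : ∀ j, n < j → B₀ (P j) (P n) = 0 := fun j hj =>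
    hPorth j _ (by rw [degree_eq_natDegree (hPmonic n).ne_zero, hPdeg]; exact_mod_cast hj)
  have hhP : (h * P n).natDegree = n + N := by
    rw [hmonic.natDegree_mul (hPmonic n), hdeg, hPdeg, add_comm]
  have hQorth' : ∀ q : ℝ[X], q.degree < (Pstar (n + N)).natDegree → B (Pstar (n + N)) q = 0 :=
    fun q hq => hQorth _ q (by rwa [hQdeg] at hq)
  calc B (Pstar (n + N)) (Pstar (n + N))
      = B (Pstar (n + N)) (h * P n) :=
        apply_self_eq_apply_of_monic B (hQmonic _) (hmonic.mul (hPmonic n))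
          (by rw [hQdeg, hhP]) hQorth'
    _ = B₀ (Pstar (n + N)) (P n) := hrel' _ _
    _ = A n (n + N) * B₀ (P n) (P n) := by
      rw [hPstar, min_eq_left (by omega), map_add, LinearMap.add_apply,
        hPorth_lt _ (by omega), zero_add,
        apply_sum_C_mul_eq_of_orthogonal B₀ (i₀ := N) (by simp [hN]), Nat.add_sub_cancel]
      intro k hk hkN
      exact hPorth_lt _ (by simp only [Finset.mem_Icc] at hk; omega)

theorem norm_of_Pstar (N : ℕ) (hN : 1 ≤ N)
    (h : Polynomial ℝ) (hmonic : h.Monic) (hdeg : h.natDegree = N)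
    (B₀ B : Polynomial ℝ →ₗ[ℝ] Polynomial ℝ →ₗ[ℝ] ℝ)
    (hsym₀ : ∀ f g, B₀ f g = B₀ g f) (hsym : ∀ f g, B f g = B g f)
    (hpos₀ : ∀ q : Polynomial ℝ, q ≠ 0 → 0 < B₀ q q)
    (hpos : ∀ q : Polynomial ℝ, q ≠ 0 → 0 < B q q)
    (hrel : ∀ f g, B (h * f) g = B₀ f g) (hrel' : ∀ f g, B f (h * g) = B₀ f g)
    (P : ℕ → Polynomial ℝ)
    (hPmonic : ∀ n, (P n).Monic) (hPdeg : ∀ n, (P n).natDegree = n)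
    (hPorth : ∀ n : ℕ, ∀ q : Polynomial ℝ, q.degree < n → B₀ (P n) q = 0)
    (Pstar : ℕ → Polynomial ℝ)
    (hQmonic : ∀ n, (Pstar n).Monic) (hQdeg : ∀ n, (Pstar n).natDegree = n)
    (hQorth : ∀ n : ℕ, ∀ q : Polynomial ℝ, q.degree < n → B (Pstar n) q = 0)
    (A : ℕ → ℕ → ℝ)
    (hPstar : ∀ n, Pstar n =
      P n + ∑ k ∈ Finset.Icc 1 (min N n), C (A (n - k) n) * P (n - k)) :
    ∀ n : ℕ, B (Pstar (n + N)) (Pstar (n + N)) = A n (n + N) * B₀ (P n) (P n) :=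
  norm_of_Pstar_general N hN h hmonic hdeg B₀ B hrel' P hPmonic hPdeg hPorth Pstar hQmonic hQdeg
    hQorth A hPstar
end

section
/- Let J be the matrix of multiplication by t in the basis of monic orthogonal polynomials {P_n} of dμ₀ = h dμ (a monic tridiagonal Jacobi matrix, acting on the column vector P = (P_0,P_1,…)^T via tP = JP). Let L be the lower triangular banded matrix with unit diagonal encoding P^* = L P, and U the upper triangular banded matrix encoding hP = U P^*. Then h(J) = U L and the band matrix J^* of multiplication by h in the basis {P_n^*} (hP^* = J^* P^*) satisfies J^* = L U. -/
open Polynomial MeasureTheory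

/-- Product of semi-infinite matrices (well-defined pointwise for banded matrices,
where each series has finite support). -/
noncomputable def matMul (A B : Matrix ℕ ℕ ℝ) : Matrix ℕ ℕ ℝ :=
  Matrix.of fun i j => ∑' k, A i k * B k j

/-- Powers of a semi-infinite matrix. -/
noncomputable def matPow (A : Matrix ℕ ℕ ℝ) : ℕ → Matrix ℕ ℕ ℝ
  | 0 => 1
  | m + 1 => matMul (matPow A m) A

/-- Evaluation of a polynomial at a semi-infinite matrix: h(A) = Σ b_m A^m. -/
noncomputable def polyEvalMat (h : Polynomial ℝ) (A : Matrix ℕ ℕ ℝ) : Matrix ℕ ℕ ℝ :=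
  Matrix.of fun i j => ∑ m ∈ Finset.range (h.natDegree + 1), h.coeff m * matPow A m i j

/-!
Every matrix in the statement is the matrix of multiplication by a polynomial from one of the
bases `{P_n}`, `{P_n^*}` to another: `J` of `t` on `{P_n}`, `L` of `1` from `{P_n^*}` to `{P_n}`,
`U` of `h` from `{P_n}` to `{P_n^*}`, `J^*` of `h` on `{P_n^*}`. Since all these matrices have
bounded upper bandwidth, products of such matrices are finite sums and represent the product of
the multipliers, and `h(J)` represents `h` on `{P_n}`. A monic sequence with `deg P_n = n` is
linearly independent, so the representing matrix is unique: `h(J)` and `UL` both represent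
`h · 1` on `{P_n}`, while `J^*` and `LU` both represent `1 · h` on `{P_n^*}`.
-/

open Finset

theorem Polynomial.linearIndependent_of_natDegree_eq {R : Type*} [Ring R] [IsDomain R]
    {P : ℕ → R[X]} (hP : ∀ n, P n ≠ 0) (hdeg : ∀ n, (P n).natDegree = n) :
    LinearIndependent R P :=
  Sequence.linearIndependent ⟨P, fun n => by rw [degree_eq_natDegree (hP n), hdeg n]⟩

theorem matMul_apply_eq_sum_range {A : Matrix ℕ ℕ ℝ} {w : ℕ} (hA : ∀ n k, n + w < k → A n k = 0)
    (B : Matrix ℕ ℕ ℝ) (n j : ℕ) :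
    matMul A B n j = ∑ k ∈ range (n + w + 1), A n k * B k j :=
  tsum_eq_sum fun k hk => by
    rw [hA n k (by simp only [mem_range, not_lt] at hk; omega), zero_mul]

structure IsMulMatrix (f : ℝ[X]) (P Q : ℕ → ℝ[X]) (w : ℕ) (A : Matrix ℕ ℕ ℝ) : Prop where
  band : ∀ n k, n + w < k → A n k = 0
  mul_eq : ∀ n, f * P n = ∑ k ∈ range (n + w + 1), C (A n k) * Q k

namespace IsMulMatrix

variable {f g : ℝ[X]} {P Q R : ℕ → ℝ[X]} {a b : ℕ} {A B : Matrix ℕ ℕ ℝ}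

theorem mul_eq_sum_range_of_le (hA : IsMulMatrix f P Q a A) {n M : ℕ} (hM : n + a + 1 ≤ M) :
    f * P n = ∑ k ∈ range M, C (A n k) * Q k := by
  rw [hA.mul_eq n]
  refine sum_subset (range_subset_range.mpr hM) fun k _ hk => ?_
  rw [hA.band n k (by simp only [mem_range, not_lt] at hk; omega), C_0, zero_mul]

theorem mono (hA : IsMulMatrix f P Q a A) {b : ℕ} (hab : a ≤ b) : IsMulMatrix f P Q b A where
  band n k hk := hA.band n k (by omega)
  mul_eq n := hA.mul_eq_sum_range_of_le (by omega)

theorem one : IsMulMatrix 1 P P 0 1 where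
  band n k hk := Matrix.one_apply_ne (by omega)
  mul_eq n := by
    rw [one_mul, sum_eq_single_of_mem n (by simp)]
    · simp
    · intro k _ hkn
      rw [Matrix.one_apply_ne hkn.symm, C_0, zero_mul]

theorem matMul (hA : IsMulMatrix f P Q a A) (hB : IsMulMatrix g Q R b B) :
    IsMulMatrix (f * g) P R (a + b) (_root_.matMul A B) where
  band n j hj := by
    rw [matMul_apply_eq_sum_range hA.band]
    refine sum_eq_zero fun k hk => ?_
    rw [hB.band k j (by simp only [mem_range] at hk; omega), mul_zero]
  mul_eq n := by
    have expand_g : ∀ k ∈ range (n + a + 1), g * Q k =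
        ∑ j ∈ range (n + (a + b) + 1), C (B k j) * R j := fun k hk =>
      hB.mul_eq_sum_range_of_le (by simp only [mem_range] at hk; omega)
    calc f * g * P n = ∑ k ∈ range (n + a + 1), C (A n k) * (g * Q k) := by
          rw [mul_comm f, mul_assoc, hA.mul_eq n, mul_sum]
          exact sum_congr rfl fun k _ => mul_left_comm _ _ _
      _ = ∑ j ∈ range (n + (a + b) + 1), ∑ k ∈ range (n + a + 1), C (A n k * B k j) * R j := by
          rw [sum_congr rfl fun k hk => by rw [expand_g k hk], sum_comm]
          simp only [mul_sum, C_mul, mul_assoc]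
      _ = _ := by
          simp only [matMul_apply_eq_sum_range hA.band, ← sum_mul, map_sum]

theorem sum {ι : Type*} {s : Finset ι} {f : ι → ℝ[X]} {A : ι → Matrix ℕ ℕ ℝ} (c : ι → ℝ)
    (hA : ∀ i ∈ s, IsMulMatrix (f i) P Q a (A i)) :
    IsMulMatrix (∑ i ∈ s, C (c i) * f i) P Q a (Matrix.of fun n k => ∑ i ∈ s, c i * A i n k) where
  band n k hk := sum_eq_zero fun i hi => by rw [(hA i hi).band n k hk, mul_zero]
  mul_eq n := by
    rw [sum_mul, sum_congr rfl fun i hi => by rw [mul_assoc, (hA i hi).mul_eq n]]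
    simp only [Matrix.of_apply, map_sum, C_mul, mul_sum, sum_mul, mul_assoc]
    exact sum_comm

theorem unique (hQ : LinearIndependent ℝ Q) (hA : IsMulMatrix f P Q a A)
    (hB : IsMulMatrix f P Q b B) : A = B := by
  ext n k
  obtain ⟨M, hMa, hMb⟩ : ∃ M, n + a + 1 ≤ M ∧ n + b + 1 ≤ M := ⟨n + a + b + 1, by omega, by omega⟩
  have hsum : ∑ j ∈ range M, A n j • Q j = ∑ j ∈ range M, B n j • Q j := by
    simp only [smul_eq_C_mul, ← hA.mul_eq_sum_range_of_le hMa, ← hB.mul_eq_sum_range_of_le hMb]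
  refine linearIndependent_iff''ₛ.mp hQ _ _ _ (fun j hj => ?_) hsum k
  simp only [mem_range, not_lt] at hj
  rw [hA.band n j (by omega), hB.band n j (by omega)]

end IsMulMatrix

theorem IsMulMatrix.matPow {P : ℕ → ℝ[X]} {J : Matrix ℕ ℕ ℝ} (hJ : IsMulMatrix X P P 1 J)
    (m : ℕ) : IsMulMatrix (X ^ m) P P m (matPow J m) := by
  induction m with
  | zero => exact IsMulMatrix.one
  | succ m ih => rw [pow_succ]; exact ih.matMul hJ

theorem IsMulMatrix.polyEvalMat {P : ℕ → ℝ[X]} {J : Matrix ℕ ℕ ℝ} (hJ : IsMulMatrix X P P 1 J)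
    (h : ℝ[X]) : IsMulMatrix h P P h.natDegree (polyEvalMat h J) := by
  conv => enter [1]; rw [h.as_sum_range_C_mul_X_pow]
  exact IsMulMatrix.sum _ fun m hm =>
    (hJ.matPow m).mono (by simp only [mem_range] at hm; omega)

theorem darboux_factorization_general (N : ℕ)
    (h : Polynomial ℝ)
    (P : ℕ → Polynomial ℝ)
    (hPmonic : ∀ n, (P n).Monic) (hPdeg : ∀ n, (P n).natDegree = n)
    (Pstar : ℕ → Polynomial ℝ)
    (hQmonic : ∀ n, (Pstar n).Monic) (hQdeg : ∀ n, (Pstar n).natDegree = n)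
    (J L U Jstar : Matrix ℕ ℕ ℝ)
    (hJ : ∀ n, X * P n = ∑ k ∈ Finset.range (n + 2), C (J n k) * P k)
    (hJband : ∀ n k, n + 2 ≤ k → J n k = 0)
    (hL : ∀ n, Pstar n = ∑ k ∈ Finset.range (n + 1), C (L n k) * P k)
    (hLband : ∀ n k, (n < k ∨ k + N < n) → L n k = 0)
    (hU : ∀ n, h * P n = ∑ k ∈ Finset.range (n + N + 1), C (U n k) * Pstar k)
    (hUband : ∀ n k, (k < n ∨ n + N < k) → U n k = 0)
    (hJstar : ∀ n, h * Pstar n = ∑ k ∈ Finset.range (n + N + 1), C (Jstar n k) * Pstar k)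
    (hJstarband : ∀ n k, n + N < k → Jstar n k = 0) :
    ∀ n m : ℕ,
      polyEvalMat h J n m = matMul U L n m ∧ Jstar n m = matMul L U n m := by
  have hJ' : IsMulMatrix X P P 1 J := ⟨hJband, hJ⟩
  have hL' : IsMulMatrix 1 Pstar P 0 L :=
    ⟨fun n k hk => hLband n k (Or.inl (by omega)), fun n => by rw [one_mul]; exact hL n⟩
  have hU' : IsMulMatrix h P Pstar N U := ⟨fun n k hk => hUband n k (Or.inr hk), hU⟩
  have hJstar' : IsMulMatrix h Pstar Pstar N Jstar := ⟨hJstarband, hJstar⟩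
  have hUL : IsMulMatrix h P P (N + 0) (matMul U L) := mul_one h ▸ hU'.matMul hL'
  have hLU : IsMulMatrix h Pstar Pstar (0 + N) (matMul L U) := one_mul h ▸ hL'.matMul hU'
  have hP := linearIndependent_of_natDegree_eq (fun n => (hPmonic n).ne_zero) hPdeg
  have hPstar := linearIndependent_of_natDegree_eq (fun n => (hQmonic n).ne_zero) hQdeg
  intro n m
  exact ⟨congrFun₂ ((hJ'.polyEvalMat h).unique hP hUL) n m,
    congrFun₂ (hJstar'.unique hPstar hLU) n m⟩

theorem darboux_factorization (N : ℕ) (hN : 1 ≤ N)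
    (h : Polynomial ℝ) (hmonic : h.Monic) (hdeg : h.natDegree = N)
    (μ : Measure ℝ) (hint : ∀ f : Polynomial ℝ, Integrable (fun t => f.eval t) μ)
    (P : ℕ → Polynomial ℝ)
    (hPmonic : ∀ n, (P n).Monic) (hPdeg : ∀ n, (P n).natDegree = n)
    (hPorth : ∀ n : ℕ, ∀ q : Polynomial ℝ, q.degree < n →
      ∫ t, (P n).eval t * q.eval t * h.eval t ∂μ = 0)
    (hPpos : ∀ n, 0 < ∫ t, (P n).eval t ^ 2 * h.eval t ∂μ)
    (Pstar : ℕ → Polynomial ℝ)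
    (hQmonic : ∀ n, (Pstar n).Monic) (hQdeg : ∀ n, (Pstar n).natDegree = n)
    (J L U Jstar : Matrix ℕ ℕ ℝ)
    (hJ : ∀ n, X * P n = ∑ k ∈ Finset.range (n + 2), C (J n k) * P k)
    (hJband : ∀ n k, n + 2 ≤ k → J n k = 0)
    (hL : ∀ n, Pstar n = ∑ k ∈ Finset.range (n + 1), C (L n k) * P k)
    (hLdiag : ∀ n, L n n = 1)
    (hLband : ∀ n k, (n < k ∨ k + N < n) → L n k = 0)
    (hU : ∀ n, h * P n = ∑ k ∈ Finset.range (n + N + 1), C (U n k) * Pstar k)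
    (hUband : ∀ n k, (k < n ∨ n + N < k) → U n k = 0)
    (hJstar : ∀ n, h * Pstar n = ∑ k ∈ Finset.range (n + N + 1), C (Jstar n k) * Pstar k)
    (hJstarband : ∀ n k, n + N < k → Jstar n k = 0) :
    ∀ n m : ℕ,
      polyEvalMat h J n m = matMul U L n m ∧ Jstar n m = matMul L U n m :=
  darboux_factorization_general N h P hPmonic hPdeg Pstar hQmonic hQdeg J L U Jstar hJ hJband hL
    hLband hU hUband hJstar hJstarband
end

section
/- Let B be a symmetric bilinear form on ℝ[t], h monic of degree N with B(hf,g)=B(f,hg)=(f,g)₀ where ( , )₀ is quasi-definite with monic orthogonal polynomials {P_n}. For n ≥ N define the N×N matrix D_n with entries (D_n)_{q,j} = B(P_{n−1−j}, t^q), 0 ≤ q,j ≤ N−1, and d_n^* = det D_n. Then B is quasi-definite (i.e., admits a full sequence of monic orthogonal polynomials) if and only if d_n^* ≠ 0 for all n. -/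
open Polynomial Finset Matrix

/-- The determinant `d_n^*`: for `n ≥ N` it is the `N × N` determinant
`det (B(P_{n-1-j}, t^q))`, and for `n < N` the analogous `n × n` determinant. -/
noncomputable def dstar (N : ℕ) (B : Polynomial ℝ →ₗ[ℝ] Polynomial ℝ →ₗ[ℝ] ℝ)
    (P : ℕ → Polynomial ℝ) (n : ℕ) : ℝ :=
  (Matrix.of fun q j : Fin (min N n) => B (P (n - 1 - (j : ℕ))) (X ^ (q : ℕ))).det

lemma expand_left (B : Polynomial ℝ →ₗ[ℝ] Polynomial ℝ →ₗ[ℝ] ℝ)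
    (p g : Polynomial ℝ) (n : ℕ) (hp : p.natDegree < n) :
    B p g = ∑ j ∈ Finset.range n, p.coeff j * B (X ^ j) g := by
  have hrep : p = ∑ j ∈ Finset.range n, p.coeff j • (X : Polynomial ℝ) ^ j := by
    conv_lhs => rw [p.as_sum_range' n hp]
    exact Finset.sum_congr rfl fun j _ => (smul_X_eq_monomial).symm
  conv_lhs => rw [hrep]
  simp [map_sum, LinearMap.sum_apply, _root_.map_smul, LinearMap.smul_apply, smul_eq_mul]

lemma det_rowcol (B : Polynomial ℝ →ₗ[ℝ] Polynomial ℝ →ₗ[ℝ] ℝ)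
    (hsym : ∀ f g, B f g = B g f) (n : ℕ) (R S : ℕ → Polynomial ℝ)
    (hRm : ∀ i, (R i).Monic) (hRd : ∀ i, (R i).natDegree = i)
    (hSm : ∀ i, (S i).Monic) (hSd : ∀ i, (S i).natDegree = i) :
    (Matrix.of fun i j : Fin n => B (R (i : ℕ)) (S (j : ℕ))).det
      = (Matrix.of fun i j : Fin n => B (X ^ (i : ℕ)) (X ^ (j : ℕ))).det := by
  set G : Matrix (Fin n) (Fin n) ℝ :=
    Matrix.of fun i j : Fin n => B (X ^ (i : ℕ)) (X ^ (j : ℕ)) with hG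
  set Cm : Matrix (Fin n) (Fin n) ℝ := Matrix.of fun i j : Fin n => (R (i : ℕ)).coeff j with hCm
  set Dm : Matrix (Fin n) (Fin n) ℝ := Matrix.of fun i j : Fin n => (S (i : ℕ)).coeff j with hDm
  have hprod : (Matrix.of fun i j : Fin n => B (R (i : ℕ)) (S (j : ℕ))) = Cm * (G * Dmᵀ) := by
    ext i j
    have h1 : B (R (i : ℕ)) (S (j : ℕ))
        = ∑ k ∈ Finset.range n, (R (i : ℕ)).coeff k * B (X ^ k) (S (j : ℕ)) :=
      expand_left B _ _ n (by rw [hRd]; exact i.isLt)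
    have h2 : ∀ k : ℕ, B (X ^ k) (S (j : ℕ))
        = ∑ l ∈ Finset.range n, (S (j : ℕ)).coeff l * B (X ^ k) (X ^ l) := by
      intro k
      rw [hsym, expand_left B _ _ n (by rw [hSd]; exact j.isLt)]
      exact Finset.sum_congr rfl fun l _ => by rw [hsym]
    have h1' : B (R (i : ℕ)) (S (j : ℕ))
        = ∑ k : Fin n, (R (i : ℕ)).coeff k * B (X ^ (k : ℕ)) (S (j : ℕ)) := by
      rw [Fin.sum_univ_eq_sum_range (fun k => (R (i : ℕ)).coeff k * B (X ^ k) (S (j : ℕ))) n]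
      exact h1
    have h2' : ∀ k : Fin n, B (X ^ (k : ℕ)) (S (j : ℕ))
        = ∑ l : Fin n, (S (j : ℕ)).coeff l * B (X ^ (k : ℕ)) (X ^ (l : ℕ)) := by
      intro k
      rw [Fin.sum_univ_eq_sum_range
        (fun l => (S (j : ℕ)).coeff l * B (X ^ (k : ℕ)) (X ^ l)) n]
      exact h2 (k : ℕ)
    simp only [Matrix.mul_apply, Matrix.transpose_apply, Matrix.of_apply]
    rw [h1']
    refine Finset.sum_congr rfl fun k _ => ?_
    rw [h2' k]
    simp only [Finset.mul_sum]
    refine Finset.sum_congr rfl fun l _ => ?_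
    simp only [hCm, hDm, hG, Matrix.of_apply]
    ring
  have hCdet : Cm.det = 1 := by
    have htri : Cm.BlockTriangular OrderDual.toDual := by
      intro i j hij
      have hij' : (i : ℕ) < (j : ℕ) := hij
      simp only [hCm, Matrix.of_apply]
      exact Polynomial.coeff_eq_zero_of_natDegree_lt (by rw [hRd]; exact hij')
    rw [Matrix.det_of_lowerTriangular Cm htri]
    refine Finset.prod_eq_one fun i _ => ?_
    have := (hRm (i : ℕ)).coeff_natDegree
    rw [hRd] at this
    simpa [hCm] using this
  have hDdet : Dm.det = 1 := by
    have htri : Dm.BlockTriangular OrderDual.toDual := by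
      intro i j hij
      have hij' : (i : ℕ) < (j : ℕ) := hij
      simp only [hDm, Matrix.of_apply]
      exact Polynomial.coeff_eq_zero_of_natDegree_lt (by rw [hSd]; exact hij')
    rw [Matrix.det_of_lowerTriangular Dm htri]
    refine Finset.prod_eq_one fun i _ => ?_
    have := (hSm (i : ℕ)).coeff_natDegree
    rw [hSd] at this
    simpa [hDm] using this
  rw [hprod, Matrix.det_mul, Matrix.det_mul, Matrix.det_transpose, hCdet, hDdet]
  ring

lemma diag_ne (B₀ : Polynomial ℝ →ₗ[ℝ] Polynomial ℝ →ₗ[ℝ] ℝ)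
    (hsym₀ : ∀ f g, B₀ f g = B₀ g f)
    (hquasi₀ : ∀ n : ℕ,
      (Matrix.of fun i j : Fin n => B₀ (X ^ (i : ℕ)) (X ^ (j : ℕ))).det ≠ 0)
    (P : ℕ → Polynomial ℝ)
    (hPmonic : ∀ n, (P n).Monic) (hPdeg : ∀ n, (P n).natDegree = n)
    (hPorth : ∀ n : ℕ, ∀ q : Polynomial ℝ, q.degree < n → B₀ (P n) q = 0)
    (q : ℕ) : B₀ (P q) (X ^ q) ≠ 0 := by
  have hdet : (Matrix.of fun i j : Fin (q+1) => B₀ (P (i : ℕ)) (X ^ (j : ℕ))).det ≠ 0 := by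
    rw [det_rowcol B₀ hsym₀ (q+1) P (fun l => X ^ l) hPmonic hPdeg
      (fun l => monic_X_pow l) (fun l => natDegree_X_pow l)]
    exact hquasi₀ (q+1)
  have htri : (Matrix.of fun i j : Fin (q+1) => B₀ (P (i : ℕ)) (X ^ (j : ℕ))).BlockTriangular
      id := by
    intro i j hij
    have hij' : (j : ℕ) < (i : ℕ) := hij
    exact hPorth (i : ℕ) (X ^ (j : ℕ)) (by rw [degree_X_pow]; exact_mod_cast hij')
  rw [Matrix.det_of_upperTriangular htri] at hdet
  have := Finset.prod_ne_zero_iff.mp hdet (Fin.last q) (Finset.mem_univ _)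
  simpa using this


lemma dstar_cast (N : ℕ) (B : Polynomial ℝ →ₗ[ℝ] Polynomial ℝ →ₗ[ℝ] ℝ)
    (P : ℕ → Polynomial ℝ) (n m : ℕ) (hmin : min N n = m) :
    dstar N B P n
      = (Matrix.of fun q j : Fin m => B (P (n - 1 - (j : ℕ))) (X ^ (q : ℕ))).det := by
  subst hmin; rfl
lemma perm_det_ne_iff {k : Type*} [DecidableEq k] [Fintype k] (σ : Equiv.Perm k) (M : Matrix k k ℝ) :
    (M.submatrix σ id).det ≠ 0 ↔ M.det ≠ 0 := by
  rw [Matrix.det_permute σ M]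
  constructor
  · intro hne h0
    exact hne (by rw [h0, mul_zero])
  · intro hne
    have hs : ((Equiv.Perm.sign σ : ℤ) : ℝ) ≠ 0 := by
      rcases Int.units_eq_one_or (Equiv.Perm.sign σ) with hs | hs <;> simp [hs]
    exact mul_ne_zero hs hne

lemma key (N : ℕ) (hN : 1 ≤ N)
    (h : Polynomial ℝ) (hmonic : h.Monic) (hdeg : h.natDegree = N)
    (B₀ B : Polynomial ℝ →ₗ[ℝ] Polynomial ℝ →ₗ[ℝ] ℝ)
    (hsym₀ : ∀ f g, B₀ f g = B₀ g f) (hsym : ∀ f g, B f g = B g f)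
    (hrel' : ∀ f g, B f (h * g) = B₀ f g)
    (hquasi₀ : ∀ n : ℕ,
      (Matrix.of fun i j : Fin n => B₀ (X ^ (i : ℕ)) (X ^ (j : ℕ))).det ≠ 0)
    (P : ℕ → Polynomial ℝ)
    (hPmonic : ∀ n, (P n).Monic) (hPdeg : ∀ n, (P n).natDegree = n)
    (hPorth : ∀ n : ℕ, ∀ q : Polynomial ℝ, q.degree < n → B₀ (P n) q = 0)
    (n : ℕ) :
    (Matrix.of fun i j : Fin n => B (X ^ (i : ℕ)) (X ^ (j : ℕ))).det ≠ 0
      ↔ dstar N B P n ≠ 0 := by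
  rcases le_total n N with hle | hge
  · -- simple case : n ≤ N
    have hds := dstar_cast N B P n n (min_eq_right hle)
    set E : Matrix (Fin n) (Fin n) ℝ :=
      Matrix.of fun i j : Fin n => B (P (i : ℕ)) (X ^ (j : ℕ)) with hE
    have hEdet : E.det
        = (Matrix.of fun i j : Fin n => B (X ^ (i : ℕ)) (X ^ (j : ℕ))).det :=
      det_rowcol B hsym n P (fun l => X ^ l) hPmonic hPdeg
        (fun l => monic_X_pow l) (fun l => natDegree_X_pow l)
    have hMstar : (Matrix.of fun q j : Fin n => B (P (n - 1 - (j : ℕ))) (X ^ (q : ℕ)))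
        = (E.submatrix Fin.revPerm id)ᵀ := by
      ext q j
      have hv : ((Fin.rev j) : ℕ) = n - 1 - (j : ℕ) := by
        rw [Fin.val_rev]; omega
      simp only [Matrix.of_apply, Matrix.transpose_apply, Matrix.submatrix_apply,
        Fin.revPerm_apply, id_eq, hE]
      rw [hv]
    rw [hds, hMstar, Matrix.det_transpose, ← hEdet]
    exact (perm_det_ne_iff Fin.revPerm E).symm
  · -- block case : N ≤ n
    have hds := dstar_cast N B P n N (min_eq_left hge)
    set Q : ℕ → Polynomial ℝ := fun j => if j < N then X ^ j else h * X ^ (j - N) with hQ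
    have hQm : ∀ j, (Q j).Monic := by
      intro j
      by_cases hj : j < N
      · simpa [hQ, hj] using monic_X_pow (R := ℝ) j
      · simpa [hQ, hj] using hmonic.mul (monic_X_pow (R := ℝ) (j - N))
    have hQd : ∀ j, (Q j).natDegree = j := by
      intro j
      by_cases hj : j < N
      · simp [hQ, hj]
      · have := hmonic.natDegree_mul (monic_X_pow (R := ℝ) (j - N))
        rw [hdeg, natDegree_X_pow] at this
        simp only [hQ, hj, if_false]
        rw [this]; omega
    set A : Matrix (Fin n) (Fin n) ℝ :=
      Matrix.of fun i j : Fin n => B (P (i : ℕ)) (Q (j : ℕ)) with hA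
    have hAdet : A.det
        = (Matrix.of fun i j : Fin n => B (X ^ (i : ℕ)) (X ^ (j : ℕ))).det :=
      det_rowcol B hsym n P Q hPmonic hPdeg hQm hQd
    set eR : Fin N ⊕ Fin (n - N) ≃ Fin n :=
      (Equiv.sumComm (Fin N) (Fin (n - N))).trans
        (finSumFinEquiv.trans (finCongr (by omega))) with heR
    set eC : Fin N ⊕ Fin (n - N) ≃ Fin n :=
      finSumFinEquiv.trans (finCongr (by omega)) with heC
    have hvR1 : ∀ r : Fin N, ((eR (Sum.inl r)) : ℕ) = (n - N) + (r : ℕ) := by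
      intro r; simp [heR]
    have hvR2 : ∀ q : Fin (n - N), ((eR (Sum.inr q)) : ℕ) = (q : ℕ) := by
      intro q; simp [heR]
    have hvC1 : ∀ j : Fin N, ((eC (Sum.inl j)) : ℕ) = (j : ℕ) := by
      intro j; simp [heC]
    have hvC2 : ∀ m : Fin (n - N), ((eC (Sum.inr m)) : ℕ) = N + (m : ℕ) := by
      intro m; simp [heC]
    set D' : Matrix (Fin N) (Fin N) ℝ :=
      Matrix.of fun r j : Fin N => B (P (n - N + (r : ℕ))) (X ^ (j : ℕ)) with hD'
    set Xb : Matrix (Fin (n - N)) (Fin N) ℝ :=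
      Matrix.of fun q j => B (P (q : ℕ)) (X ^ (j : ℕ)) with hXb
    set T : Matrix (Fin (n - N)) (Fin (n - N)) ℝ :=
      Matrix.of fun q m => B₀ (P (q : ℕ)) (X ^ (m : ℕ)) with hT
    have hQval1 : ∀ k : ℕ, k < N → Q k = X ^ k := by
      intro k hk; simp [hQ, hk]
    have hQval2 : ∀ m : ℕ, Q (N + m) = h * X ^ m := by
      intro m; simp [hQ, Nat.add_sub_cancel_left]
    have hblock : A.submatrix eR eC = Matrix.fromBlocks D' 0 Xb T := by
      ext i j
      rcases i with r | q <;> rcases j with jj | m <;>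
        simp only [Matrix.submatrix_apply, hA, Matrix.of_apply, Matrix.fromBlocks,
          Matrix.of_apply, Sum.elim_inl, Sum.elim_inr, hvR1, hvR2, hvC1, hvC2]
      · rw [hQval1 (jj : ℕ) jj.isLt]; simp [hD']
      · rw [hQval2 (m : ℕ), hrel']
        simp only [Matrix.zero_apply]
        refine hPorth _ _ ?_
        rw [degree_X_pow]
        exact_mod_cast (by omega : (m : ℕ) < n - N + (r : ℕ))
      · rw [hQval1 (jj : ℕ) jj.isLt]; simp [hXb]
      · rw [hQval2 (m : ℕ), hrel']; simp [hT]
    have hTdet : T.det ≠ 0 := by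
      have htri : T.BlockTriangular id := by
        intro q m hmq
        have hmq' : (m : ℕ) < (q : ℕ) := hmq
        simp only [hT, Matrix.of_apply]
        exact hPorth (q : ℕ) (X ^ (m : ℕ)) (by rw [degree_X_pow]; exact_mod_cast hmq')
      rw [Matrix.det_of_upperTriangular htri]
      refine Finset.prod_ne_zero_iff.mpr fun q _ => ?_
      simpa [hT] using diag_ne B₀ hsym₀ hquasi₀ P hPmonic hPdeg hPorth (q : ℕ)
    -- determinant of A vs blocks
    have hsub : A.submatrix eR eC = (A.submatrix eC eC).submatrix (eR.trans eC.symm) id := by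
      ext i j; simp [Matrix.submatrix_apply]
    have hAiff : A.det ≠ 0 ↔ D'.det ≠ 0 := by
      have h1 : (A.submatrix eR eC).det ≠ 0 ↔ A.det ≠ 0 := by
        rw [hsub]
        rw [perm_det_ne_iff (eR.trans eC.symm) (A.submatrix eC eC)]
        rw [Matrix.det_submatrix_equiv_self]
      rw [← h1, hblock, Matrix.det_fromBlocks_zero₁₂, mul_ne_zero_iff]
      exact ⟨fun h => h.1, fun h => ⟨h, hTdet⟩⟩
    -- dstar vs D'
    have hMstar : (Matrix.of fun q j : Fin N => B (P (n - 1 - (j : ℕ))) (X ^ (q : ℕ)))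
        = (D'.submatrix Fin.revPerm id)ᵀ := by
      ext q j
      have hv : n - N + ((Fin.rev j) : ℕ) = n - 1 - (j : ℕ) := by
        rw [Fin.val_rev]
        have := j.isLt
        omega
      simp only [Matrix.of_apply, Matrix.transpose_apply, Matrix.submatrix_apply,
        Fin.revPerm_apply, id_eq, hD']
      rw [hv]
    rw [hds, hMstar, Matrix.det_transpose, ← hAdet]
    rw [perm_det_ne_iff Fin.revPerm D']
    exact hAiff

theorem quasi_definite_iff_dstar_nonzero (N : ℕ) (hN : 1 ≤ N)
    (h : Polynomial ℝ) (hmonic : h.Monic) (hdeg : h.natDegree = N)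
    (B₀ B : Polynomial ℝ →ₗ[ℝ] Polynomial ℝ →ₗ[ℝ] ℝ)
    (hsym₀ : ∀ f g, B₀ f g = B₀ g f) (hsym : ∀ f g, B f g = B g f)
    (hrel : ∀ f g, B (h * f) g = B₀ f g) (hrel' : ∀ f g, B f (h * g) = B₀ f g)
    (hquasi₀ : ∀ n : ℕ,
      (Matrix.of fun i j : Fin n => B₀ (X ^ (i : ℕ)) (X ^ (j : ℕ))).det ≠ 0)
    (P : ℕ → Polynomial ℝ)
    (hPmonic : ∀ n, (P n).Monic) (hPdeg : ∀ n, (P n).natDegree = n)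
    (hPorth : ∀ n : ℕ, ∀ q : Polynomial ℝ, q.degree < n → B₀ (P n) q = 0) :
    (∀ n : ℕ, (Matrix.of fun i j : Fin n => B (X ^ (i : ℕ)) (X ^ (j : ℕ))).det ≠ 0)
      ↔ (∀ n : ℕ, dstar N B P n ≠ 0) := by
  exact forall_congr' fun n =>
    key N hN h hmonic hdeg B₀ B hsym₀ hsym hrel' hquasi₀ P hPmonic hPdeg hPorth n
end

section
/- In the quasi-definite multiple Geronimus setting (B(hf,g)=(f,g)₀, h monic of degree N, d_n^* ≠ 0 for all n), for n ≥ N the monic orthogonal polynomial P_n^* of B admits the determinantal representation P_n^*(t) = (1/d_n^*) · det of the (N+1)×(N+1) matrix whose first column is (P_n(t), P_{n−1}(t), …, P_{n−N}(t))^T and whose remaining columns have entries B(P_{n−i}, t^q) for q = 0,…,N−1 and i = 0,…,N. -/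
open Polynomial

namespace Matrix

variable {R S : Type*} [CommRing R] [CommRing S] [Algebra R S] {n : ℕ}

theorem map_det_updateCol_map_algebraMap (L : S →ₗ[R] R)
    (A : Matrix (Fin (n + 1)) (Fin (n + 1)) R) (j : Fin (n + 1)) (v : Fin (n + 1) → S) :
    L ((A.map (algebraMap R S)).updateCol j v).det = (A.updateCol j (L ∘ v)).det := by
  rw [det_succ_column _ j, det_succ_column _ j, map_sum]
  refine Finset.sum_congr rfl fun i _ => ?_
  rw [updateCol_self, updateCol_self, submatrix_updateCol_succAbove, submatrix_updateCol_succAbove,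
    submatrix_map]
  set minor := A.submatrix i.succAbove j.succAbove
  have hminor : (minor.map (algebraMap R S)).det = algebraMap R S minor.det :=
    (RingHom.map_det (algebraMap R S) minor).symm
  have hsmul : (-1) ^ (i + j : ℕ) * v i * algebraMap R S minor.det =
      ((-1) ^ (i + j : ℕ) * minor.det) • v i := by
    rw [Algebra.smul_def, map_mul, map_pow, map_neg, map_one]
    ring
  rw [hminor, hsmul, map_smul, smul_eq_mul, Function.comp_apply]
  ring

theorem det_updateCol_single (A : Matrix (Fin (n + 1)) (Fin (n + 1)) R) (i j : Fin (n + 1)) :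
    (A.updateCol j (Pi.single i 1)).det =
      (-1) ^ (i + j : ℕ) * (A.submatrix i.succAbove j.succAbove).det := by
  rw [det_succ_column _ j, Fintype.sum_eq_single i]
  · simp
  · intro k hk
    simp [Pi.single_eq_of_ne hk]

end Matrix

namespace Polynomial

section LinearFunctionals

variable {R M : Type*} [CommRing R] [AddCommGroup M] [Module R M]

theorem linearMap_eq_zero_of_degree_lt {L : R[X] →ₗ[R] M} {n : ℕ}
    (hL : ∀ q < n, L (X ^ q) = 0) {f : R[X]} (hf : f.degree < n) : L f = 0 := by
  classical
  have hspan : degreeLT R n ≤ LinearMap.ker L := by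
    rw [degreeLT_eq_span_X_pow, Submodule.span_le, Finset.coe_image, Set.image_subset_iff]
    intro q hq
    exact hL q (by simpa using hq)
  exact hspan (mem_degreeLT.2 hf)

theorem linearMap_eq_zero_of_degree_lt_add [Nontrivial R] {L : R[X] →ₗ[R] M} {h : R[X]}
    (hh : h.Monic) {m : ℕ} (hlow : ∀ q < h.natDegree, L (X ^ q) = 0)
    (hmul : ∀ s : R[X], s.degree < m → L (h * s) = 0)
    {f : R[X]} (hf : f.degree < (h.natDegree + m : ℕ)) : L f = 0 := by
  have hquot : (f /ₘ h).degree < m := by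
    by_cases hq : f /ₘ h = 0
    · simp [hq]
    have hhf : h.natDegree ≤ f.natDegree :=
      natDegree_le_natDegree (not_lt.1 ((divByMonic_eq_zero_iff hh).not.1 hq))
    have hf0 : f ≠ 0 := by rintro rfl; simp at hq
    rw [degree_eq_natDegree hq, natDegree_divByMonic f hh, Nat.cast_lt]
    rw [degree_eq_natDegree hf0, Nat.cast_lt] at hf
    omega
  have hrem : (f %ₘ h).degree < h.natDegree :=
    (degree_modByMonic_lt f hh).trans_eq (degree_eq_natDegree hh.ne_zero)
  rw [← modByMonic_add_div f h, map_add, linearMap_eq_zero_of_degree_lt hlow hrem, hmul _ hquot,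
    add_zero]

end LinearFunctionals

section Orthogonality

variable {R : Type*} [CommRing R] {B : R[X] →ₗ[R] R[X] →ₗ[R] R}

theorem degree_sub_C_coeff_mul_lt {f p : R[X]} {n : ℕ} (hp : p.Monic) (hpdeg : p.natDegree = n)
    (hf : f.degree ≤ n) : (f - C (f.coeff n) * p).degree < n := by
  rw [degree_lt_iff_coeff_zero]
  intro m hm
  rcases hm.eq_or_lt with rfl | hlt
  · rw [coeff_sub, coeff_C_mul, ← hpdeg, hp.coeff_natDegree, mul_one, sub_self]
  · have hfm : f.coeff m = 0 := coeff_eq_zero_of_degree_lt (hf.trans_lt (by exact_mod_cast hlt))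
    have hpm : p.coeff m = 0 := coeff_eq_zero_of_natDegree_lt (hpdeg ▸ hlt)
    rw [coeff_sub, coeff_C_mul, hfm, hpm, mul_zero, sub_zero]

theorem orthogonal_sub_C_mul {f p : R[X]} {n : ℕ} (c : R)
    (hf : ∀ g : R[X], g.degree < n → B f g = 0) (hp : ∀ g : R[X], g.degree < n → B p g = 0)
    {g : R[X]} (hg : g.degree < n) : B (f - C c * p) g = 0 := by
  rw [← smul_eq_C_mul, map_sub, map_smul, LinearMap.sub_apply, LinearMap.smul_apply, hf g hg,
    hp g hg, smul_zero, sub_zero]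

variable [IsDomain R] {Q : ℕ → R[X]}

theorem eq_zero_of_degree_lt_of_orthogonal (hmonic : ∀ k, (Q k).Monic)
    (hdeg : ∀ k, (Q k).natDegree = k)
    (horth : ∀ k : ℕ, ∀ g : R[X], g.degree < k → B (Q k) g = 0)
    (hnd : ∀ k, B (Q k) (Q k) ≠ 0) {n : ℕ} {f : R[X]} (hf : f.degree < n)
    (hforth : ∀ g : R[X], g.degree < n → B f g = 0) : f = 0 := by
  induction n generalizing f with
  | zero => simpa using hf
  | succ n ih =>
    have hQn : (Q n).degree < (n + 1 : ℕ) := by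
      rw [degree_eq_natDegree (hmonic n).ne_zero, hdeg n]
      exact_mod_cast n.lt_succ_self
    have hforth' : ∀ g : R[X], g.degree < n → B f g = 0 :=
      fun g hg => hforth g (hg.trans (by exact_mod_cast n.lt_succ_self))
    have hfn : f.degree ≤ n := Order.le_of_lt_succ (by exact_mod_cast hf)
    have hrest : f = C (f.coeff n) * Q n := sub_eq_zero.1 <|
      ih (degree_sub_C_coeff_mul_lt (hmonic n) (hdeg n) hfn)
        fun g hg => orthogonal_sub_C_mul _ hforth' (horth n) hg
    have hc : f.coeff n * B (Q n) (Q n) = 0 := by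
      rw [← smul_eq_mul, ← LinearMap.smul_apply, ← map_smul, smul_eq_C_mul, ← hrest,
        hforth _ hQn]
    rw [hrest, (mul_eq_zero.1 hc).resolve_right (hnd n), C_0, zero_mul]

theorem eq_C_coeff_mul_of_orthogonal (hmonic : ∀ k, (Q k).Monic)
    (hdeg : ∀ k, (Q k).natDegree = k)
    (horth : ∀ k : ℕ, ∀ g : R[X], g.degree < k → B (Q k) g = 0)
    (hnd : ∀ k, B (Q k) (Q k) ≠ 0) {n : ℕ} {f : R[X]} (hf : f.degree ≤ n)
    (hforth : ∀ g : R[X], g.degree < n → B f g = 0) : f = C (f.coeff n) * Q n :=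
  sub_eq_zero.1 <| eq_zero_of_degree_lt_of_orthogonal hmonic hdeg horth hnd
    (degree_sub_C_coeff_mul_lt (hmonic n) (hdeg n) hf)
    fun _ hg => orthogonal_sub_C_mul _ hforth (horth n) hg

end Orthogonality

end Polynomial

section MomentDeterminant

variable {R : Type*} [CommRing R] (B : R[X] →ₗ[R] R[X] →ₗ[R] R) (P : ℕ → R[X])
  (N n : ℕ)

/-- Column `0` is a placeholder: `momentDet` overwrites it with `P (n - i)`. -/
noncomputable def momentMatrix : Matrix (Fin (N + 1)) (Fin (N + 1)) R :=
  Matrix.of fun i j => B (P (n - i)) (X ^ ((j : ℕ) - 1))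

noncomputable def momentDet : R[X] :=
  (((momentMatrix B P N n).map C).updateCol 0 fun i => P (n - i)).det

theorem det_ite_eq_momentDet :
    (Matrix.of fun i j : Fin (N + 1) =>
      if j = 0 then P (n - (i : ℕ)) else C (B (P (n - (i : ℕ))) (X ^ ((j : ℕ) - 1)))).det =
      momentDet B P N n := by
  rw [momentDet]
  congr 1
  ext i j
  by_cases hj : j = 0 <;> simp [hj, momentMatrix]

theorem apply_momentDet (L : R[X] →ₗ[R] R) :
    L (momentDet B P N n) =
      ((momentMatrix B P N n).updateCol 0 fun i => L (P (n - i))).det := by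
  rw [momentDet, ← algebraMap_eq, Matrix.map_det_updateCol_map_algebraMap]
  rfl

variable {B P N n}

theorem momentDet_orthogonal [Nontrivial R] {B₀ : R[X] →ₗ[R] R[X] →ₗ[R] R} {h : R[X]}
    (hmonic : h.Monic) (hdeg : h.natDegree = N) (hrel' : ∀ f g, B f (h * g) = B₀ f g)
    (hPorth : ∀ k : ℕ, ∀ q : R[X], q.degree < k → B₀ (P k) q = 0) (hn : N ≤ n)
    {f : R[X]} (hf : f.degree < n) : B (momentDet B P N n) f = 0 := by
  refine linearMap_eq_zero_of_degree_lt_add hmonic (m := n - N) (fun q hq => ?_)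
    (fun s hs => ?_) (by rwa [hdeg, Nat.add_sub_cancel' hn])
  · rw [hdeg] at hq
    rw [← LinearMap.flip_apply, apply_momentDet]
    refine Matrix.det_zero_of_column_eq (i := 0) (j := ⟨q + 1, by omega⟩)
      (by simp [Fin.ext_iff]) fun k => ?_
    simp [Fin.ext_iff, momentMatrix]
  · rw [← LinearMap.flip_apply, apply_momentDet]
    refine Matrix.det_eq_zero_of_column_eq_zero 0 fun i => ?_
    rw [Matrix.updateCol_self, LinearMap.flip_apply, hrel']
    refine hPorth _ _ (hs.trans_le ?_)
    have := i.isLt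
    exact_mod_cast (show n - N ≤ n - i by omega)

theorem degree_momentDet_le (hPdeg : ∀ k, (P k).natDegree ≤ k) :
    (momentDet B P N n).degree ≤ n := by
  refine (degree_le_iff_coeff_zero _ _).2 fun m hm => ?_
  rw [← lcoeff_apply, apply_momentDet]
  refine Matrix.det_eq_zero_of_column_eq_zero 0 fun i => ?_
  have hnm : n < m := by exact_mod_cast hm
  rw [Matrix.updateCol_self, lcoeff_apply]
  exact coeff_eq_zero_of_natDegree_lt ((hPdeg _).trans_lt (by omega))

theorem coeff_momentDet (hPmonic : ∀ k, (P k).Monic) (hPdeg : ∀ k, (P k).natDegree = k)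
    (hn : N ≤ n) :
    (momentDet B P N n).coeff n = ((momentMatrix B P N n).submatrix Fin.succ Fin.succ).det := by
  have hcol : (fun i : Fin (N + 1) => lcoeff R n (P (n - i))) = Pi.single 0 1 := by
    ext i
    rcases Fin.eq_zero_or_eq_succ i with rfl | ⟨k, rfl⟩
    · rw [Pi.single_eq_same, Fin.val_zero, Nat.sub_zero, lcoeff_apply]
      simpa only [hPdeg] using (hPmonic n).coeff_natDegree
    · rw [Pi.single_eq_of_ne (Fin.succ_ne_zero k), lcoeff_apply]
      refine coeff_eq_zero_of_natDegree_lt ?_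
      rw [hPdeg, Fin.val_succ]
      omega
  rw [← lcoeff_apply, apply_momentDet, hcol, Matrix.det_updateCol_single]
  simp

end MomentDeterminant

theorem dstar_eq_det_momentMatrix_submatrix {N n : ℕ} (hn : N ≤ n)
    (B : Polynomial ℝ →ₗ[ℝ] Polynomial ℝ →ₗ[ℝ] ℝ) (P : ℕ → Polynomial ℝ) :
    dstar N B P n = ((momentMatrix B P N n).submatrix Fin.succ Fin.succ).det := by
  rw [dstar, ← Matrix.det_submatrix_equiv_self (finCongr (min_eq_left hn)).symm,
    ← Matrix.det_transpose]
  congr 1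
  ext i j
  simp [momentMatrix, Nat.sub_sub, add_comm]

theorem determinantal_representation_general (N : ℕ)
    (h : Polynomial ℝ) (hmonic : h.Monic) (hdeg : h.natDegree = N)
    (B₀ B : Polynomial ℝ →ₗ[ℝ] Polynomial ℝ →ₗ[ℝ] ℝ)
    (hrel' : ∀ f g, B f (h * g) = B₀ f g)
    (P : ℕ → Polynomial ℝ)
    (hPmonic : ∀ n, (P n).Monic) (hPdeg : ∀ n, (P n).natDegree = n)
    (hPorth : ∀ n : ℕ, ∀ q : Polynomial ℝ, q.degree < n → B₀ (P n) q = 0)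
    (Pstar : ℕ → Polynomial ℝ)
    (hQmonic : ∀ n, (Pstar n).Monic) (hQdeg : ∀ n, (Pstar n).natDegree = n)
    (hQorth : ∀ n : ℕ, ∀ q : Polynomial ℝ, q.degree < n → B (Pstar n) q = 0)
    (hQnd : ∀ n, B (Pstar n) (Pstar n) ≠ 0) :
    ∀ n : ℕ, N ≤ n →
      C (dstar N B P n) * Pstar n =
        (Matrix.of fun i j : Fin (N + 1) =>
          if j = 0 then P (n - (i : ℕ))
          else C (B (P (n - (i : ℕ))) (X ^ ((j : ℕ) - 1)))).det := by
  intro n hn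
  rw [det_ite_eq_momentDet, dstar_eq_det_momentMatrix_submatrix hn,
    ← coeff_momentDet hPmonic hPdeg hn]
  exact (eq_C_coeff_mul_of_orthogonal hQmonic hQdeg hQorth hQnd
    (degree_momentDet_le fun k => (hPdeg k).le)
    fun _ hf => momentDet_orthogonal hmonic hdeg hrel' hPorth hn hf).symm

theorem determinantal_representation (N : ℕ) (hN : 1 ≤ N)
    (h : Polynomial ℝ) (hmonic : h.Monic) (hdeg : h.natDegree = N)
    (B₀ B : Polynomial ℝ →ₗ[ℝ] Polynomial ℝ →ₗ[ℝ] ℝ)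
    (hsym₀ : ∀ f g, B₀ f g = B₀ g f) (hsym : ∀ f g, B f g = B g f)
    (hrel : ∀ f g, B (h * f) g = B₀ f g) (hrel' : ∀ f g, B f (h * g) = B₀ f g)
    (P : ℕ → Polynomial ℝ)
    (hPmonic : ∀ n, (P n).Monic) (hPdeg : ∀ n, (P n).natDegree = n)
    (hPorth : ∀ n : ℕ, ∀ q : Polynomial ℝ, q.degree < n → B₀ (P n) q = 0)
    (hPnd : ∀ n, B₀ (P n) (P n) ≠ 0)
    (hdstar : ∀ n : ℕ, dstar N B P n ≠ 0)
    (Pstar : ℕ → Polynomial ℝ)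
    (hQmonic : ∀ n, (Pstar n).Monic) (hQdeg : ∀ n, (Pstar n).natDegree = n)
    (hQorth : ∀ n : ℕ, ∀ q : Polynomial ℝ, q.degree < n → B (Pstar n) q = 0)
    (hQnd : ∀ n, B (Pstar n) (Pstar n) ≠ 0) :
    ∀ n : ℕ, N ≤ n →
      C (dstar N B P n) * Pstar n =
        (Matrix.of fun i j : Fin (N + 1) =>
          if j = 0 then P (n - (i : ℕ))
          else C (B (P (n - (i : ℕ))) (X ^ ((j : ℕ) - 1)))).det :=
  determinantal_representation_general N h hmonic hdeg B₀ B hrel' P hPmonic hPdeg hPorth Pstar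
    hQmonic hQdeg hQorth hQnd
end

section
/- Let ( , )₀ be positive definite with monic orthogonal polynomials {P_n} and B a positive definite multiple Geronimus transform with monic orthogonal polynomials P_n^* = P_n + Σ_{k=1}^N A_{n−k}^{[n]} P_{n−k}. Let J^* = (B(h P̂_n^*, P̂_m^*))_{n,m≥0} be the symmetric matrix in the orthonormal basis P̂_n^* = P_n^*/h_n^*, h_n^* = B(P_n^*,P_n^*)^{1/2}. Then J^* = C C^T, where C is the lower triangular banded matrix with entries C_{n,n−k} = A_{n−k}^{[n]} h_{n−k} / h_n^* for 0 ≤ k ≤ N (with A_n^{[n]}=1), where h_j = (P_j,P_j)₀^{1/2}. In particular the diagonal entries of C are positive. -/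
/-!
Since `B (h f) g = B₀ f g`, the entry `B (h P*ₙ) P*ₘ` is `B₀ (P*ₙ) (P*ₘ)`. Expanding `P*ₙ` and `P*ₘ`
in the `B₀`-orthogonal family `Pⱼ` turns it into `∑ⱼ aₙⱼ aₘⱼ hⱼ²`, where `aₙⱼ` is the coefficient of
`Pⱼ` in `P*ₙ`; dividing by `h*ₙ h*ₘ` gives `∑ⱼ Cₙⱼ Cₘⱼ`.
-/

open Polynomial

theorem LinearMap.IsOrthoᵢ.apply_sum_smul_sum_smul {ι R M : Type*} [CommSemiring R]
    [AddCommMonoid M] [Module R M] [DecidableEq ι] {B : M →ₗ[R] M →ₗ[R] R} {v : ι → M}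
    (hB : B.IsOrthoᵢ v) (s t : Finset ι) (a b : ι → R) :
    B (∑ i ∈ s, a i • v i) (∑ j ∈ t, b j • v j) = ∑ i ∈ s ∩ t, a i * b i * B (v i) (v i) := by
  simp only [map_sum, map_smul, LinearMap.sum_apply, LinearMap.smul_apply, smul_eq_mul]
  rw [Finset.inter_comm, ← Finset.sum_ite_mem]
  refine Finset.sum_congr rfl fun j _ => ?_
  have hdiag (i : ι) : a i * B (v i) (v j) = if i = j then a j * B (v j) (v j) else 0 := by
    split_ifs with hij
    · rw [hij]
    · rw [LinearMap.isOrthoᵢ_def.1 hB i j hij, mul_zero]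
  rw [Finset.sum_congr rfl fun i _ => hdiag i, Finset.sum_ite_eq']
  split_ifs <;> ring

theorem Polynomial.isOrthoᵢ_of_forall_degree_lt {R M : Type*} [CommSemiring R]
    [AddCommMonoid M] [Module R M] {B : R[X] →ₗ[R] R[X] →ₗ[R] M} (hsym : ∀ f g, B f g = B g f)
    {P : ℕ → R[X]} (hdeg : ∀ n, (P n).degree = n)
    (horth : ∀ (n : ℕ) (q : R[X]), q.degree < n → B (P n) q = 0) : B.IsOrthoᵢ P := by
  refine LinearMap.isOrthoᵢ_def.2 fun j k hjk => ?_
  rcases hjk.lt_or_gt with hlt | hlt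
  · rw [hsym]
    exact horth k (P j) (by rw [hdeg]; exact_mod_cast hlt)
  · exact horth j (P k) (by rw [hdeg]; exact_mod_cast hlt)

/-- The coefficient of `P j` in `P* n`: the paper's `A_j^{[n]}` for `n - N ≤ j < n`, with
`A_n^{[n]} = 1`, and `0` outside the band. -/
def bandCoeff {R : Type*} [Zero R] [One R] (N : ℕ) (A : ℕ → ℕ → R) (n j : ℕ) : R :=
  if j ≤ n ∧ n ≤ j + N then (if j = n then 1 else A j n) else 0

section bandCoeff

variable {R : Type*} (N : ℕ) (A : ℕ → ℕ → R)

theorem bandCoeff_self [Zero R] [One R] (n : ℕ) : bandCoeff N A n n = 1 := by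
  simp [bandCoeff]

theorem bandCoeff_eq_zero_of_lt [Zero R] [One R] {n j : ℕ} (h : n < j) :
    bandCoeff N A n j = 0 := by
  rw [bandCoeff, if_neg (by omega)]

theorem add_sum_Icc_smul_eq_sum_range_bandCoeff {M : Type*} [Semiring R] [AddCommMonoid M]
    [Module R M] (v : ℕ → M) (n : ℕ) :
    v n + ∑ k ∈ Finset.Icc 1 (min N n), A (n - k) n • v (n - k) =
      ∑ j ∈ Finset.range (n + 1), bandCoeff N A n j • v j := by
  rw [Finset.sum_range_succ, bandCoeff_self, one_smul, add_comm]
  congr 1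
  have hband : Finset.Ico (n - min N n) n ⊆ Finset.range n := fun j hj => by
    simp only [Finset.mem_Ico, Finset.mem_range] at hj ⊢
    exact hj.2
  rw [← Finset.sum_subset hband fun j hj hj' => by
    simp only [Finset.mem_Ico, Finset.mem_range] at hj hj'
    rw [bandCoeff, if_neg (by omega), zero_smul]]
  refine Finset.sum_nbij' (n - ·) (n - ·) ?_ ?_ ?_ ?_ ?_ <;>
    intro k hk <;> simp only [Finset.mem_Icc, Finset.mem_Ico] at hk ⊢
  · omega
  · omega
  · omega
  · omega
  · rw [bandCoeff, if_pos (by omega), if_neg (by omega)]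

end bandCoeff

theorem cholesky_factorization_of_Jstar_general (N : ℕ)
    (h : Polynomial ℝ)
    (B₀ B : Polynomial ℝ →ₗ[ℝ] Polynomial ℝ →ₗ[ℝ] ℝ)
    (hsym₀ : ∀ f g, B₀ f g = B₀ g f)
    (hpos₀ : ∀ q : Polynomial ℝ, q ≠ 0 → 0 < B₀ q q)
    (hpos : ∀ q : Polynomial ℝ, q ≠ 0 → 0 < B q q)
    (hrel : ∀ f g, B (h * f) g = B₀ f g)
    (P : ℕ → Polynomial ℝ)
    (hPmonic : ∀ n, (P n).Monic) (hPdeg : ∀ n, (P n).natDegree = n)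
    (hPorth : ∀ n : ℕ, ∀ q : Polynomial ℝ, q.degree < n → B₀ (P n) q = 0)
    (Pstar : ℕ → Polynomial ℝ)
    (hQmonic : ∀ n, (Pstar n).Monic)
    (A : ℕ → ℕ → ℝ)
    (hPstar : ∀ n, Pstar n =
      P n + ∑ k ∈ Finset.Icc 1 (min N n), C (A (n - k) n) * P (n - k))
    (Cmat : Matrix ℕ ℕ ℝ)
    (hC : ∀ n m : ℕ, Cmat n m =
      if m ≤ n ∧ n ≤ m + N then
        (if m = n then (1 : ℝ) else A m n) *
          Real.sqrt (B₀ (P m) (P m)) / Real.sqrt (B (Pstar n) (Pstar n))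
      else 0) :
    ∀ n m : ℕ,
      (B (h * Pstar n) (Pstar m) /
          (Real.sqrt (B (Pstar n) (Pstar n)) * Real.sqrt (B (Pstar m) (Pstar m)))
        = ∑' k, Cmat n k * Cmat m k) ∧ 0 < Cmat n n := by
  have hP0 : ∀ n, P n ≠ 0 := fun n => (hPmonic n).ne_zero
  have hortho : B₀.IsOrthoᵢ P := isOrthoᵢ_of_forall_degree_lt hsym₀
    (fun n => by rw [degree_eq_natDegree (hP0 n), hPdeg]) hPorth
  have hexp (n : ℕ) : Pstar n = ∑ j ∈ Finset.range (n + 1), bandCoeff N A n j • P j := by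
    simp only [hPstar, ← smul_eq_C_mul]
    exact add_sum_Icc_smul_eq_sum_range_bandCoeff N A P n
  have hCmat (n m : ℕ) : Cmat n m =
      bandCoeff N A n m * √(B₀ (P m) (P m)) / √(B (Pstar n) (Pstar n)) := by
    rw [hC, bandCoeff]
    split_ifs <;> ring
  have hCmat_zero {n k : ℕ} (hk : n < k) : Cmat n k = 0 := by
    rw [hCmat, bandCoeff_eq_zero_of_lt N A hk, zero_mul, zero_div]
  intro n m
  constructor
  · have hsupp : ∀ k ∉ Finset.range (n + 1) ∩ Finset.range (m + 1), Cmat n k * Cmat m k = 0 := by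
      intro k hk
      simp only [Finset.mem_inter, Finset.mem_range, not_and_or, not_lt, Nat.add_one_le_iff] at hk
      rcases hk with hk | hk
      · rw [hCmat_zero hk, zero_mul]
      · rw [hCmat_zero hk, mul_zero]
    have hgram : B₀ (Pstar n) (Pstar m) =
        ∑ k ∈ Finset.range (n + 1) ∩ Finset.range (m + 1),
          bandCoeff N A n k * bandCoeff N A m k * B₀ (P k) (P k) := by
      rw [hexp n, hexp m, hortho.apply_sum_smul_sum_smul]
    rw [tsum_eq_sum hsupp, hrel, hgram, Finset.sum_div]
    refine Finset.sum_congr rfl fun k _ => ?_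
    rw [hCmat n, hCmat m, div_mul_div_comm, mul_mul_mul_comm,
      Real.mul_self_sqrt (hpos₀ _ (hP0 k)).le]
  · rw [hCmat, bandCoeff_self, one_mul]
    exact div_pos (Real.sqrt_pos.2 (hpos₀ _ (hP0 n)))
      (Real.sqrt_pos.2 (hpos _ (hQmonic n).ne_zero))

theorem cholesky_factorization_of_Jstar (N : ℕ) (hN : 1 ≤ N)
    (h : Polynomial ℝ) (hmonic : h.Monic) (hdeg : h.natDegree = N)
    (B₀ B : Polynomial ℝ →ₗ[ℝ] Polynomial ℝ →ₗ[ℝ] ℝ)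
    (hsym₀ : ∀ f g, B₀ f g = B₀ g f) (hsym : ∀ f g, B f g = B g f)
    (hpos₀ : ∀ q : Polynomial ℝ, q ≠ 0 → 0 < B₀ q q)
    (hpos : ∀ q : Polynomial ℝ, q ≠ 0 → 0 < B q q)
    (hrel : ∀ f g, B (h * f) g = B₀ f g) (hrel' : ∀ f g, B f (h * g) = B₀ f g)
    (P : ℕ → Polynomial ℝ)
    (hPmonic : ∀ n, (P n).Monic) (hPdeg : ∀ n, (P n).natDegree = n)
    (hPorth : ∀ n : ℕ, ∀ q : Polynomial ℝ, q.degree < n → B₀ (P n) q = 0)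
    (Pstar : ℕ → Polynomial ℝ)
    (hQmonic : ∀ n, (Pstar n).Monic) (hQdeg : ∀ n, (Pstar n).natDegree = n)
    (hQorth : ∀ n : ℕ, ∀ q : Polynomial ℝ, q.degree < n → B (Pstar n) q = 0)
    (A : ℕ → ℕ → ℝ)
    (hPstar : ∀ n, Pstar n =
      P n + ∑ k ∈ Finset.Icc 1 (min N n), C (A (n - k) n) * P (n - k))
    (Cmat : Matrix ℕ ℕ ℝ)
    (hC : ∀ n m : ℕ, Cmat n m =
      if m ≤ n ∧ n ≤ m + N then
        (if m = n then (1 : ℝ) else A m n) *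
          Real.sqrt (B₀ (P m) (P m)) / Real.sqrt (B (Pstar n) (Pstar n))
      else 0) :
    ∀ n m : ℕ,
      (B (h * Pstar n) (Pstar m) /
          (Real.sqrt (B (Pstar n) (Pstar n)) * Real.sqrt (B (Pstar m) (Pstar m)))
        = ∑' k, Cmat n k * Cmat m k) ∧ 0 < Cmat n n :=
  cholesky_factorization_of_Jstar_general N h B₀ B hsym₀ hpos₀ hpos hrel P hPmonic hPdeg hPorth
    Pstar hQmonic A hPstar Cmat hC
end
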